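/- arXiv:2501.01574 — 11 statements merged into one kernel-verified Lean document; each statement's English description precedes it below -/
import Mathlib

section
/- Let x and y be two points (not necessarily distinct) such that E[N(x)²] < ∞ and E[N(y)²] < ∞. Then h(x)h(y) is integrable and E[h(x) h(y)] = E[N(x,y)], i.e. the covariance of the heights at x and y equals the expected number of loops surrounding both x and y. -/
open MeasureTheory ProbabilityTheory

/-- The finite sets of loops (`Finset Γ`) carry the discrete (`⊤`) sigma-algebra. -/
instance (priority := low) loopSigmaAlgebra (Γ : Type*) : MeasurableSpace (Finset Γ) := ⊤

/-!
Given the loop configuration `S`, the heights are finite sums of independent fair signs, and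
`E[s_γ s_δ] = 1{γ = δ}` turns `E[h(x) h(y) | S]` into `|S_x ∩ S_y|`. Because `S` is independent
of the signs, the joint law of `(S, s)` is a product measure, so this conditioning is just Fubini.
Integrability follows from `|h(x)| ≤ N(x)` and `2ab ≤ a² + b²`.
-/

theorem Finset.abs_sum_le_card {ι : Type*} {F : Finset ι} {a : ι → ℝ} (ha : ∀ i ∈ F, |a i| ≤ 1) :
    |∑ i ∈ F, a i| ≤ F.card := by
  calc |∑ i ∈ F, a i| ≤ ∑ i ∈ F, |a i| := Finset.abs_sum_le_sum_abs _ _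
    _ ≤ ∑ _i ∈ F, (1 : ℝ) := Finset.sum_le_sum ha
    _ = F.card := by simp

theorem measurable_finsetSum_apply {ι M : Type*} [Countable ι] [MeasurableSpace (Finset ι)]
    [MeasurableSingletonClass (Finset ι)] [AddCommMonoid M] [MeasurableSpace M] [MeasurableAdd₂ M] :
    Measurable fun p : Finset ι × (ι → M) => ∑ i ∈ p.1, p.2 i :=
  measurable_from_prod_countable_right fun F =>
    Finset.measurable_sum F fun i _ => measurable_pi_apply i

theorem ProbabilityTheory.IndepFun.integral_comp_eq_integral_integral
    {Ω β γ E : Type*} [MeasurableSpace Ω] {μ : Measure Ω} [IsFiniteMeasure μ]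
    [MeasurableSpace β] [MeasurableSpace γ] [NormedAddCommGroup E] [NormedSpace ℝ E]
    {T : Ω → β} {Y : Ω → γ} (hTY : IndepFun T Y μ) (hT : Measurable T) (hY : Measurable Y)
    {f : β × γ → E} (hf : StronglyMeasurable f) (hint : Integrable (fun ω => f (T ω, Y ω)) μ) :
    ∫ ω, f (T ω, Y ω) ∂μ = ∫ ω, ∫ ω', f (T ω, Y ω') ∂μ ∂μ := by
  have hmap : μ.map (fun ω => (T ω, Y ω)) = (μ.map T).prod (μ.map Y) :=
    (indepFun_iff_map_prod_eq_prod_map_map hT.aemeasurable hY.aemeasurable).1 hTY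
  have hint' : Integrable f ((μ.map T).prod (μ.map Y)) := by
    rw [← hmap]
    exact (integrable_map_measure hf.aestronglyMeasurable
      (hT.prodMk hY).aemeasurable).2 hint
  calc ∫ ω, f (T ω, Y ω) ∂μ = ∫ p, f p ∂(μ.map T).prod (μ.map Y) := by
        rw [← hmap, integral_map (hT.prodMk hY).aemeasurable hf.aestronglyMeasurable]
    _ = ∫ b, ∫ c, f (b, c) ∂μ.map Y ∂μ.map T := integral_prod f hint'
    _ = ∫ ω, ∫ ω', f (T ω, Y ω') ∂μ ∂μ := by
        rw [integral_map hT.aemeasurable hf.integral_prod_right'.aestronglyMeasurable]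
        congr 1
        funext ω
        exact integral_map hY.aemeasurable
          (hf.comp_measurable measurable_prodMk_left).aestronglyMeasurable

section Rademacher

variable {Ω : Type*} [MeasurableSpace Ω] {μ : Measure Ω}

def IsRademacher (ξ : Ω → ℝ) (μ : Measure Ω) : Prop :=
  μ {ω | ξ ω = 1} = 1 / 2 ∧ μ {ω | ξ ω = -1} = 1 / 2

variable [IsProbabilityMeasure μ]

namespace IsRademacher

variable {ξ η : Ω → ℝ}

theorem ae_eq_one_or_eq_neg_one (h : IsRademacher ξ μ) (hξ : Measurable ξ) :
    ∀ᵐ ω ∂μ, ξ ω = 1 ∨ ξ ω = -1 := by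
  have hA : MeasurableSet {ω | ξ ω = 1} := hξ (measurableSet_singleton 1)
  have hB : MeasurableSet {ω | ξ ω = -1} := hξ (measurableSet_singleton (-1))
  have hdisj : Disjoint {ω | ξ ω = 1} {ω | ξ ω = -1} :=
    Set.disjoint_left.2 fun ω h1 h2 => by norm_num [Set.mem_ofPred_eq ▸ h1] at h2
  have hfull : μ ({ω | ξ ω = 1} ∪ {ω | ξ ω = -1}) = 1 := by
    rw [measure_union hdisj hB, h.1, h.2, ENNReal.add_halves]
  exact (ae_iff_measure_eq (hA.union hB).nullMeasurableSet).2 (hfull.trans measure_univ.symm)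

theorem abs_eq_one_ae (h : IsRademacher ξ μ) (hξ : Measurable ξ) : ∀ᵐ ω ∂μ, |ξ ω| = 1 := by
  filter_upwards [h.ae_eq_one_or_eq_neg_one hξ] with ω hω
  rcases hω with hω | hω <;> simp [hω]

theorem integrable_mul (h : IsRademacher ξ μ) (hξ : Measurable ξ) (h' : IsRademacher η μ)
    (hη : Measurable η) : Integrable (fun ω => ξ ω * η ω) μ := by
  refine (integrable_const (1 : ℝ)).mono' (hξ.mul hη).aestronglyMeasurable ?_
  filter_upwards [h.abs_eq_one_ae hξ, h'.abs_eq_one_ae hη] with ω h1 h2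
  simp [h1, h2]

theorem integral_eq_zero (h : IsRademacher ξ μ) (hξ : Measurable ξ) : ∫ ω, ξ ω ∂μ = 0 := by
  have hA : MeasurableSet {ω | ξ ω = 1} := hξ (measurableSet_singleton 1)
  have hB : MeasurableSet {ω | ξ ω = -1} := hξ (measurableSet_singleton (-1))
  have hξ_eq : ξ =ᵐ[μ] fun ω => {ω | ξ ω = 1}.indicator 1 ω - {ω | ξ ω = -1}.indicator 1 ω := by
    filter_upwards [h.ae_eq_one_or_eq_neg_one hξ] with ω hω
    rcases hω with hω | hω <;> norm_num [Set.indicator_apply, hω]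
  rw [integral_congr_ae hξ_eq, integral_sub ((integrable_const 1).indicator hA)
    ((integrable_const 1).indicator hB), integral_indicator_one hA, integral_indicator_one hB,
    measureReal_def, measureReal_def, h.1, h.2, sub_self]

theorem integral_mul_self (h : IsRademacher ξ μ) (hξ : Measurable ξ) :
    ∫ ω, ξ ω * ξ ω ∂μ = 1 := by
  have hsq : (fun ω => ξ ω * ξ ω) =ᵐ[μ] fun _ => (1 : ℝ) := by
    filter_upwards [h.abs_eq_one_ae hξ] with ω hω
    rw [← abs_mul_abs_self, hω, one_mul]
  simp [integral_congr_ae hsq]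

end IsRademacher

theorem integral_mul_eq_ite_of_isRademacher {ι : Type*} [DecidableEq ι] {s : ι → Ω → ℝ}
    (hs : ∀ i, IsRademacher (s i) μ) (hsm : ∀ i, Measurable (s i))
    (hind : Pairwise fun i j => IndepFun (s i) (s j) μ) (i j : ι) :
    ∫ ω, s i ω * s j ω ∂μ = if i = j then 1 else 0 := by
  split_ifs with hij
  · subst hij
    exact (hs i).integral_mul_self (hsm i)
  · rw [(hind hij).integral_fun_mul_eq_mul_integral (hsm i).aestronglyMeasurable
      (hsm j).aestronglyMeasurable, (hs i).integral_eq_zero (hsm i), zero_mul]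

end Rademacher

theorem integral_sum_mul_sum_eq_card_inter {Ω ι : Type*} [MeasurableSpace Ω] {μ : Measure Ω}
    [DecidableEq ι] {s : ι → Ω → ℝ} (hint : ∀ i j, Integrable (fun ω => s i ω * s j ω) μ)
    (horth : ∀ i j, ∫ ω, s i ω * s j ω ∂μ = if i = j then 1 else 0) (F G : Finset ι) :
    ∫ ω, (∑ i ∈ F, s i ω) * (∑ j ∈ G, s j ω) ∂μ = (F ∩ G).card := by
  simp_rw [Finset.sum_mul_sum]
  rw [integral_finsetSum _ fun i _ => integrable_finsetSum _ fun j _ => hint i j]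
  simp_rw [integral_finsetSum _ fun j _ => hint _ j, horth]
  simp [Finset.sum_ite_eq]

/-- In the loop-sign model, if `E[N(x)²] < ∞` and `E[N(y)²] < ∞`, then the
product of heights `h(x) h(y)` is integrable and `E[h(x) h(y)] = E[N(x,y)]`, where
`N(x,y) = |S x ∩ S y|` is the number of loops surrounding both `x` and `y`. -/
theorem loopSign_height_covariance
    {Ω : Type*} [MeasurableSpace Ω] (μ : Measure Ω) [IsProbabilityMeasure μ]
    {Γ : Type*} [Countable Γ] [DecidableEq Γ] {X : Type*}
    (S : X → Ω → Finset Γ) (s : Γ → Ω → ℝ)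
    (hSmeas : ∀ x : X, Measurable (S x))
    (hsmeas : ∀ γ : Γ, Measurable (s γ))
    (hsign : ∀ γ : Γ, μ {ω | s γ ω = 1} = 1/2 ∧ μ {ω | s γ ω = -1} = 1/2)
    (hsindep : iIndepFun s μ)
    (hSsindep : IndepFun (fun ω (x : X) => S x ω) (fun ω (γ : Γ) => s γ ω) μ)
    (x y : X)
    (hx : Integrable (fun ω => ((S x ω).card : ℝ) ^ 2) μ)
    (hy : Integrable (fun ω => ((S y ω).card : ℝ) ^ 2) μ) :
    Integrable (fun ω => (∑ γ ∈ S x ω, s γ ω) * (∑ γ ∈ S y ω, s γ ω)) μ ∧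
      ∫ ω, (∑ γ ∈ S x ω, s γ ω) * (∑ γ ∈ S y ω, s γ ω) ∂μ
        = ∫ ω, ((S x ω ∩ S y ω).card : ℝ) ∂μ := by
  have hrad : ∀ γ, IsRademacher (s γ) μ := hsign
  have hS : Measurable fun ω (z : X) => S z ω := measurable_pi_lambda _ hSmeas
  have hs : Measurable fun ω (γ : Γ) => s γ ω := measurable_pi_lambda _ hsmeas
  have hheight (z : X) : Measurable fun p : (X → Finset Γ) × (Γ → ℝ) => ∑ γ ∈ p.1 z, p.2 γ :=
    measurable_finsetSum_apply.comp (f := fun p : (X → Finset Γ) × (Γ → ℝ) => (p.1 z, p.2))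
      (((measurable_pi_apply z).comp measurable_fst).prodMk measurable_snd)
  have hbound : ∀ᵐ ω ∂μ, ‖(∑ γ ∈ S x ω, s γ ω) * (∑ γ ∈ S y ω, s γ ω)‖
      ≤ (((S x ω).card : ℝ) ^ 2 + ((S y ω).card : ℝ) ^ 2) / 2 := by
    filter_upwards [ae_all_iff.2 fun γ => (hrad γ).abs_eq_one_ae (hsmeas γ)] with ω hω
    have hsum (z : X) : |∑ γ ∈ S z ω, s γ ω| ≤ (S z ω).card :=
      Finset.abs_sum_le_card fun γ _ => (hω γ).le
    rw [Real.norm_eq_abs, abs_mul]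
    nlinarith [mul_le_mul (hsum x) (hsum y) (abs_nonneg _) (Nat.cast_nonneg _),
      sq_nonneg (((S x ω).card : ℝ) - (S y ω).card)]
  have hint : Integrable (fun ω => (∑ γ ∈ S x ω, s γ ω) * (∑ γ ∈ S y ω, s γ ω)) μ :=
    ((hx.add hy).div_const 2).mono'
      (((hheight x).mul (hheight y)).comp (hS.prodMk hs)).aestronglyMeasurable hbound
  refine ⟨hint, (hSsindep.integral_comp_eq_integral_integral hS hs
    ((hheight x).mul (hheight y)).stronglyMeasurable hint).trans ?_⟩
  congr 1
  funext ω
  exact integral_sum_mul_sum_eq_card_inter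
    (fun γ δ => (hrad γ).integrable_mul (hsmeas γ) (hrad δ) (hsmeas δ))
    (integral_mul_eq_ite_of_isRademacher hrad hsmeas fun _ _ => hsindep.indepFun) _ _
end

section
/- For every n ≥ 1, all points x_1,…,x_n and all real numbers t_1,…,t_n, one has E[exp(i Σ_{i=1}^n t_i h(x_i))] = E[ Π_{∅ ≠ I ⊆ {1,…,n}} (cos(Σ_{i∈I} t_i))^{A_I} ], where for each nonempty I ⊆ {1,…,n} the random variable A_I(ω) is the number of γ ∈ S_{x_1}(ω) ∪ ⋯ ∪ S_{x_n}(ω) such that {i : γ ∈ S_{x_i}(ω)} = I (the number of loops encircling exactly the points x_i with i ∈ I among x_1,…,x_n). -/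
open MeasureTheory ProbabilityTheory

/-!
Condition on the loops. Since the loops are independent of the signs and the loop configuration
`(S (x i))ᵢ` takes countably many values, the expectation is the average over loop configurations
of the expectation over the signs alone. For frozen loops `∑ᵢ tᵢ h(xᵢ) = ∑_γ c_γ s_γ`, where `c_γ`
is the sum of the `tᵢ` over the points surrounded by `γ`; independent fair signs give
`E[exp(i c s)] = cos c`, hence `∏_γ cos c_γ`, and grouping the loops `γ` by the set `I` of points
they surround turns this into `∏_I cos(∑_{i ∈ I} tᵢ) ^ A_I`.
-/

section

open Finset

namespace Finset

variable {ι : Type*}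

theorem prod_comp_eq_prod_pow_card_fiber {κ M : Type*} [CommMonoid M] [DecidableEq κ]
    {s : Finset ι} {t : Finset κ} {g : ι → κ}
    (h : ∀ i ∈ s, g i ∈ t) (f : κ → M) :
    ∏ i ∈ s, f (g i) = ∏ k ∈ t, f k ^ #{i ∈ s | g i = k} := by
  simp_rw [← prod_const, prod_fiberwise_of_maps_to' h]

theorem sum_mul_sum_eq_sum_biUnion {Γ R : Type*} [Fintype ι] [DecidableEq Γ] [CommSemiring R]
    (v : ι → Finset Γ) (t : ι → R) (w : Γ → R) :
    ∑ i, t i * ∑ γ ∈ v i, w γ = ∑ γ ∈ univ.biUnion v, (∑ i with γ ∈ v i, t i) * w γ := by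
  simp_rw [mul_sum, sum_mul]
  exact sum_comm' fun i γ => by simpa using fun h => ⟨i, h⟩

end Finset

variable {Ω : Type*} [MeasurableSpace Ω] {μ : Measure Ω}

namespace ProbabilityTheory

theorem IndepFun.integral_comp_eq_integral_integral_s2 [IsFiniteMeasure μ]
    {α β E : Type*} [MeasurableSpace α] [MeasurableSpace β]
    [NormedAddCommGroup E] [NormedSpace ℝ E]
    {V : Ω → α} {W : Ω → β} (hVW : IndepFun V W μ) (hV : AEMeasurable V μ) (hW : AEMeasurable W μ)
    {F : α × β → E} (hFm : StronglyMeasurable F)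
    (hFi : Integrable F ((μ.map V).prod (μ.map W))) :
    ∫ ω, F (V ω, W ω) ∂μ = ∫ ω, ∫ ω', F (V ω, W ω') ∂μ ∂μ := by
  rw [← integral_map (hV.prodMk hW) hFm.aestronglyMeasurable,
    (indepFun_iff_map_prod_eq_prod_map_map hV hW).1 hVW, integral_prod F hFi,
    integral_map hV hFm.integral_prod_right'.aestronglyMeasurable]
  congr with a
  exact integral_map hW (hFm.comp_measurable measurable_prodMk_left).aestronglyMeasurable

end ProbabilityTheory

theorem integral_comp_of_fair_sign [IsProbabilityMeasure μ] {E : Type*} [NormedAddCommGroup E]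
    [NormedSpace ℝ E] [CompleteSpace E] {Y : Ω → ℝ} (hY : Measurable Y)
    (h1 : μ {ω | Y ω = 1} = 1/2) (h2 : μ {ω | Y ω = -1} = 1/2) (φ : ℝ → E) :
    ∫ ω, φ (Y ω) ∂μ = (2 : ℝ)⁻¹ • (φ 1 + φ (-1)) := by
  have hA : MeasurableSet {ω | Y ω = 1} := hY (measurableSet_singleton 1)
  have hB : MeasurableSet {ω | Y ω = -1} := hY (measurableSet_singleton (-1))
  have hdisj : Disjoint {ω | Y ω = 1} {ω | Y ω = -1} :=
    Set.disjoint_left.2 fun ω h1 h2 => by norm_num [Set.mem_ofPred_eq ▸ h1] at h2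
  have hsign : ∀ᵐ ω ∂μ, Y ω = 1 ∨ Y ω = -1 := by
    have : μ ({ω | Y ω = 1} ∪ {ω | Y ω = -1}) = 1 := by
      rw [measure_union hdisj hB, h1, h2, ENNReal.add_halves]
    exact mem_ae_iff.2 ((prob_compl_eq_zero_iff (hA.union hB)).2 this)
  have hsplit : ∀ᵐ ω ∂μ, φ (Y ω) = {ω | Y ω = 1}.indicator (fun _ => φ 1) ω
      + {ω | Y ω = -1}.indicator (fun _ => φ (-1)) ω := by
    filter_upwards [hsign] with ω hω
    rcases hω with hω | hω <;> norm_num [Set.indicator, hω]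
  rw [integral_congr_ae hsplit, integral_add ((integrable_const _).indicator hA)
    ((integrable_const _).indicator hB), integral_indicator_const _ hA,
    integral_indicator_const _ hB, measureReal_def, measureReal_def, h1, h2, smul_add]
  norm_num

theorem integral_exp_I_mul_of_fair_sign [IsProbabilityMeasure μ] {Y : Ω → ℝ} (hY : Measurable Y)
    (h1 : μ {ω | Y ω = 1} = 1/2) (h2 : μ {ω | Y ω = -1} = 1/2) (c : ℝ) :
    ∫ ω, Complex.exp (Complex.I * ↑(c * Y ω)) ∂μ = Real.cos c := by
  rw [integral_comp_of_fair_sign hY h1 h2 (fun y => Complex.exp (Complex.I * ↑(c * y))),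
    Complex.ofReal_cos, Complex.cos, Complex.real_smul]
  push_cast
  ring_nf

theorem integral_exp_I_mul_sum_of_fair_signs {Γ : Type*} {s : Γ → Ω → ℝ}
    (hsmeas : ∀ γ, Measurable (s γ))
    (hsign : ∀ γ, μ {ω | s γ ω = 1} = 1/2 ∧ μ {ω | s γ ω = -1} = 1/2)
    (hsindep : iIndepFun s μ) (c : Γ → ℝ) (T : Finset Γ) :
    ∫ ω, Complex.exp (Complex.I * ↑(∑ γ ∈ T, c γ * s γ ω)) ∂μ = ↑(∏ γ ∈ T, Real.cos (c γ)) := by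
  have := hsindep.isProbabilityMeasure
  simp_rw [Complex.ofReal_sum, mul_sum, Complex.exp_sum, Complex.ofReal_prod, ← prod_coe_sort T]
  rw [(hsindep.precomp Subtype.val_injective).integral_fun_prod_comp
    (f := fun (γ : T) (y : ℝ) => Complex.exp (Complex.I * ↑(c γ * y)))
    (fun γ => (hsmeas γ).aemeasurable) (fun γ => by fun_prop)]
  exact prod_congr rfl fun γ _ => by
    simpa using integral_exp_I_mul_of_fair_sign (hsmeas γ) (hsign γ).1 (hsign γ).2 (c γ)

/-- `A_I`: the number of loops surrounding exactly the points indexed by `I`. -/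
def exactNestingNumber {ι Γ : Type*} [Fintype ι] [DecidableEq ι] [DecidableEq Γ]
    (v : ι → Finset Γ) (I : Finset ι) : ℕ :=
  #{γ ∈ univ.biUnion v | ({i | γ ∈ v i} : Finset ι) = I}

theorem integral_exp_I_mul_sum_heights_eq_prod_cos_pow {ι Γ : Type*} [Fintype ι] [DecidableEq ι]
    [DecidableEq Γ] {s : Γ → Ω → ℝ} (hsmeas : ∀ γ, Measurable (s γ))
    (hsign : ∀ γ, μ {ω | s γ ω = 1} = 1/2 ∧ μ {ω | s γ ω = -1} = 1/2)
    (hsindep : iIndepFun s μ) (v : ι → Finset Γ) (t : ι → ℝ) :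
    ∫ ω, Complex.exp (Complex.I * ↑(∑ i, t i * ∑ γ ∈ v i, s γ ω)) ∂μ
      = ↑(∏ I ∈ univ.powerset.erase ∅, Real.cos (∑ i ∈ I, t i) ^ exactNestingNumber v I) := by
  simp_rw [sum_mul_sum_eq_sum_biUnion, integral_exp_I_mul_sum_of_fair_signs hsmeas hsign hsindep]
  congr 1
  unfold exactNestingNumber
  refine prod_comp_eq_prod_pow_card_fiber (g := fun γ => ({i | γ ∈ v i} : Finset ι))
    (fun γ hγ => ?_) (fun I => Real.cos (∑ i ∈ I, t i))
  simpa [filter_eq_empty_iff] using hγ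

end

theorem loopSign_charFun_multipoint_general
    {Ω : Type*} [MeasurableSpace Ω] (μ : Measure Ω) [IsProbabilityMeasure μ]
    {Γ : Type*} [Countable Γ] [DecidableEq Γ] {X : Type*}
    (S : X → Ω → Finset Γ) (s : Γ → Ω → ℝ)
    (hSmeas : ∀ x : X, Measurable (S x))
    (hsmeas : ∀ γ : Γ, Measurable (s γ))
    (hsign : ∀ γ : Γ, μ {ω | s γ ω = 1} = 1/2 ∧ μ {ω | s γ ω = -1} = 1/2)
    (hsindep : iIndepFun (m := fun _ : Γ => (inferInstance : MeasurableSpace ℝ)) s μ)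
    (hSsindep : IndepFun (fun ω (x : X) => S x ω) (fun ω (γ : Γ) => s γ ω) μ)
    (n : ℕ) (x : Fin n → X) (t : Fin n → ℝ) :
    ∫ ω, Complex.exp (Complex.I * (∑ i, t i * (∑ γ ∈ S (x i) ω, s γ ω) : ℝ)) ∂μ
      = ((∫ ω, ∏ I ∈ (Finset.univ : Finset (Fin n)).powerset.erase ∅,
            (Real.cos (∑ i ∈ I, t i)) ^
              (((Finset.univ.biUnion fun i => S (x i) ω).filter
                  fun γ => (Finset.univ.filter fun i => γ ∈ S (x i) ω) = I).card) ∂μ : ℝ) : ℂ) := by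
  set V : Ω → (Fin n → Finset Γ) := fun ω i => S (x i) ω
  set W : Ω → (Γ → ℝ) := fun ω γ => s γ ω
  set F : (Fin n → Finset Γ) × (Γ → ℝ) → ℂ :=
    fun p => Complex.exp (Complex.I * ↑(∑ i, t i * ∑ γ ∈ p.1 i, p.2 γ))
  have hV : Measurable V := measurable_pi_lambda _ fun i => hSmeas (x i)
  have hW : Measurable W := measurable_pi_lambda _ hsmeas
  have hVW : IndepFun V W μ :=
    hSsindep.comp (measurable_pi_lambda _ fun i => measurable_pi_apply (x i)) measurable_id
  have hF : Measurable F := measurable_from_prod_countable_right fun v => by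
    simp only [F]; fun_prop
  have hFi : Integrable F ((μ.map V).prod (μ.map W)) :=
    .of_bound hF.aestronglyMeasurable 1
      (ae_of_all _ fun _ => (Complex.norm_exp_I_mul_ofReal _).le)
  calc _ = ∫ ω, F (V ω, W ω) ∂μ := rfl
    _ = ∫ ω, ∫ ω', F (V ω, W ω') ∂μ ∂μ :=
      hVW.integral_comp_eq_integral_integral_s2 hV.aemeasurable hW.aemeasurable
        hF.stronglyMeasurable hFi
    _ = ∫ ω, ((∏ I ∈ Finset.univ.powerset.erase ∅,
          Real.cos (∑ i ∈ I, t i) ^ exactNestingNumber (V ω) I : ℝ) : ℂ) ∂μ :=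
      integral_congr_ae (ae_of_all _ fun ω =>
        integral_exp_I_mul_sum_heights_eq_prod_cos_pow hsmeas hsign hsindep (V ω) t)
    _ = _ := integral_complex_ofReal

/-- In the loop-sign model, for points `x 1, …, x n` and reals `t 1, …, t n`,
`E[exp(i ∑ t_i h(x_i))] = E[∏_{∅ ≠ I ⊆ {1,…,n}} cos(∑_{i ∈ I} t_i) ^ (A_I)]`, where `A_I ω` is
the number of loops `γ ∈ S x₁ ω ∪ ⋯ ∪ S xₙ ω` with `{i : γ ∈ S (x i) ω} = I`, i.e. the number
of loops encircling exactly the points `x i` with `i ∈ I`. -/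
theorem loopSign_charFun_multipoint
    {Ω : Type*} [MeasurableSpace Ω] (μ : Measure Ω) [IsProbabilityMeasure μ]
    {Γ : Type*} [Countable Γ] [DecidableEq Γ] {X : Type*}
    (S : X → Ω → Finset Γ) (s : Γ → Ω → ℝ)
    (hSmeas : ∀ x : X, Measurable (S x))
    (hsmeas : ∀ γ : Γ, Measurable (s γ))
    (hsign : ∀ γ : Γ, μ {ω | s γ ω = 1} = 1/2 ∧ μ {ω | s γ ω = -1} = 1/2)
    (hsindep : iIndepFun (m := fun _ : Γ => (inferInstance : MeasurableSpace ℝ)) s μ)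
    (hSsindep : IndepFun (fun ω (x : X) => S x ω) (fun ω (γ : Γ) => s γ ω) μ)
    (n : ℕ) (hn : 1 ≤ n) (x : Fin n → X) (t : Fin n → ℝ) :
    ∫ ω, Complex.exp (Complex.I * (∑ i, t i * (∑ γ ∈ S (x i) ω, s γ ω) : ℝ)) ∂μ
      = ((∫ ω, ∏ I ∈ (Finset.univ : Finset (Fin n)).powerset.erase ∅,
            (Real.cos (∑ i ∈ I, t i)) ^
              (((Finset.univ.biUnion fun i => S (x i) ω).filter
                  fun γ => (Finset.univ.filter fun i => γ ∈ S (x i) ω) = I).card) ∂μ : ℝ) : ℂ) :=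
  loopSign_charFun_multipoint_general μ S s hSmeas hsmeas hsign hsindep hSsindep n x t
end

section
/- Let x and y be points with E[N(x)²] < ∞ and E[N(y)²] < ∞. Define the centered fields ψ(x) = h(x)² − E[h(x)²] (normal-ordered square of the height) and φ(x) = N(x) − E[N(x)] (nesting field), and similarly for y. Then E[ψ(x)ψ(y)] = E[φ(x)φ(y)] + E[ 2·N(x,y)² − 2·N(x,y) ]. -/
open MeasureTheory ProbabilityTheory

/-!
Conditionally on the loops, the signs are i.i.d. Rademacher variables, so everything reduces to
moments of `h_A = ∑_{γ ∈ A} s_γ` for fixed finite sets `A`, `B`. Since `s_γ² = 1`, the products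
`χ_t = ∏_{γ ∈ t} s_γ` satisfy `χ_t χ_u = χ_{t ∆ u}` and are therefore orthonormal. Writing
`h_A² = |A| + ∑_{a ≠ b ∈ A} χ_{a,b}` gives `E[h_A²] = |A|` and
`E[h_A² h_B²] = |A| |B| + 2 |A ∩ B|² - 2 |A ∩ B|`, each unordered pair of distinct loops of
`A ∩ B` being counted by two ordered pairs on each side. Averaging over the loops (through the
product structure of the joint law, in `ℝ≥0∞` because the integrability of `h_x² h_y²` is only
known a posteriori) and subtracting the means gives the identity.
-/

open Finset
open scoped ENNReal

theorem ProbabilityTheory.IndepFun.lintegral_comp_eq_lintegral_lintegral {Ω α β : Type*}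
    [MeasurableSpace Ω] [MeasurableSpace α] [MeasurableSpace β] {μ : Measure Ω}
    [IsFiniteMeasure μ] {T : Ω → α} {W : Ω → β} (h : IndepFun T W μ) (hT : AEMeasurable T μ)
    (hW : AEMeasurable W μ) {f : α → β → ℝ≥0∞} (hf : Measurable (Function.uncurry f)) :
    ∫⁻ ω, f (T ω) (W ω) ∂μ = ∫⁻ ω, ∫⁻ ω', f (T ω) (W ω') ∂μ ∂μ := by
  calc ∫⁻ ω, f (T ω) (W ω) ∂μ
      = ∫⁻ p, Function.uncurry f p ∂(μ.map fun ω => (T ω, W ω)) :=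
        (lintegral_map' hf.aemeasurable (hT.prodMk hW)).symm
    _ = ∫⁻ a, ∫⁻ b, f a b ∂(μ.map W) ∂(μ.map T) := by
        rw [(indepFun_iff_map_prod_eq_prod_map_map hT hW).1 h, lintegral_prod _ hf.aemeasurable]
        rfl
    _ = ∫⁻ ω, ∫⁻ ω', f (T ω) (W ω') ∂μ ∂μ :=
        (lintegral_map' (f := fun a => ∫⁻ b, f a b ∂(μ.map W))
          hf.lintegral_prod_right'.aemeasurable hT).trans <| lintegral_congr fun _ =>
            lintegral_map' (hf.comp measurable_prodMk_left).aemeasurable hW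

theorem ProbabilityTheory.IndepFun.integrable_comp_and_integral_comp_eq {Ω α β : Type*}
    [MeasurableSpace Ω] [MeasurableSpace α] [MeasurableSpace β] {μ : Measure Ω}
    [IsFiniteMeasure μ] {T : Ω → α} {W : Ω → β} (h : IndepFun T W μ) (hT : AEMeasurable T μ)
    (hW : AEMeasurable W μ) {f : α → β → ℝ} (hf0 : ∀ a b, 0 ≤ f a b)
    (hf : Measurable (Function.uncurry f)) {g : α → ℝ}
    (hfg : ∀ a, Integrable (fun ω => f a (W ω)) μ ∧ ∫ ω, f a (W ω) ∂μ = g a)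
    (hgT : Integrable (fun ω => g (T ω)) μ) :
    Integrable (fun ω => f (T ω) (W ω)) μ ∧ ∫ ω, f (T ω) (W ω) ∂μ = ∫ ω, g (T ω) ∂μ := by
  have hg0 a : 0 ≤ g a := (hfg a).2 ▸ integral_nonneg fun _ => hf0 _ _
  have hf0' : 0 ≤ᵐ[μ] fun ω => f (T ω) (W ω) := ae_of_all _ fun _ => hf0 _ _
  have hg0' : 0 ≤ᵐ[μ] fun ω => g (T ω) := ae_of_all _ fun _ => hg0 _
  have hlin : ∫⁻ ω, ENNReal.ofReal (f (T ω) (W ω)) ∂μ = ∫⁻ ω, ENNReal.ofReal (g (T ω)) ∂μ := by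
    rw [h.lintegral_comp_eq_lintegral_lintegral hT hW (f := fun a b => ENNReal.ofReal (f a b))
      (ENNReal.measurable_ofReal.comp hf)]
    refine lintegral_congr fun ω => ?_
    rw [← (hfg _).2, ofReal_integral_eq_lintegral_ofReal (hfg _).1 (ae_of_all _ fun _ => hf0 _ _)]
  have hmeas : AEStronglyMeasurable (fun ω => f (T ω) (W ω)) μ :=
    (hf.comp_aemeasurable (hT.prodMk hW)).aestronglyMeasurable
  have hint : Integrable (fun ω => f (T ω) (W ω)) μ :=
    ⟨hmeas, (hasFiniteIntegral_iff_ofReal hf0').2 <|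
      hlin ▸ (hasFiniteIntegral_iff_ofReal hg0').1 hgT.2⟩
  refine ⟨hint, ?_⟩
  rw [integral_eq_lintegral_of_nonneg_ae hf0' hmeas,
    integral_eq_lintegral_of_nonneg_ae hg0' hgT.1, hlin]

theorem integral_sub_integral_mul_sub_integral {Ω : Type*} [MeasurableSpace Ω] {μ : Measure Ω}
    [IsProbabilityMeasure μ] {f g : Ω → ℝ} (hf : Integrable f μ) (hg : Integrable g μ)
    (hfg : Integrable (fun ω => f ω * g ω) μ) :
    ∫ ω, (f ω - ∫ ω', f ω' ∂μ) * (g ω - ∫ ω', g ω' ∂μ) ∂μ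
      = ∫ ω, f ω * g ω ∂μ - (∫ ω, f ω ∂μ) * ∫ ω, g ω ∂μ := by
  simp_rw [sub_mul, mul_sub]
  rw [integral_sub, integral_sub, integral_sub, integral_mul_const, integral_const_mul,
    integral_const, probReal_univ, one_smul]
  · ring
  all_goals fun_prop

namespace Finset

theorem prod_mul_prod_eq_prod_symmDiff {ι M : Type*} [CommMonoid M] [DecidableEq ι]
    {f : ι → M} {t u : Finset ι} (hf : ∀ i ∈ t ∩ u, f i * f i = 1) :
    (∏ i ∈ t, f i) * ∏ i ∈ u, f i = ∏ i ∈ symmDiff t u, f i := by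
  rw [← prod_inter_mul_prod_sdiff t u, ← prod_inter_mul_prod_sdiff u t, symmDiff_def,
    sup_eq_union, prod_union disjoint_sdiff_sdiff, inter_comm u t, mul_mul_mul_comm,
    ← prod_mul_distrib, prod_eq_one hf, one_mul]

theorem sq_sum_eq_sum_sq_add_sum_offDiag {ι R : Type*} [CommSemiring R] [DecidableEq ι]
    (A : Finset ι) (f : ι → R) :
    (∑ i ∈ A, f i) ^ 2 = ∑ i ∈ A, f i ^ 2 + ∑ p ∈ A.offDiag, f p.1 * f p.2 := by
  rw [sq, sum_mul_sum, ← sum_product', ← diag_union_offDiag, sum_union (disjoint_diag_offDiag A),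
    sum_diag]
  simp only [sq]

theorem pair_eq_pair_iff {ι : Type*} [DecidableEq ι] {a b c d : ι} :
    ({a, b} : Finset ι) = {c, d} ↔ a = c ∧ b = d ∨ a = d ∧ b = c := by
  rw [← coe_inj, coe_pair, coe_pair, Set.pair_eq_pair_iff]

theorem sum_offDiag_sum_offDiag_pair_eq_pair {ι : Type*} [DecidableEq ι] (A B : Finset ι) :
    ∑ p ∈ A.offDiag, ∑ q ∈ B.offDiag,
      (if ({p.1, p.2} : Finset ι) = {q.1, q.2} then (1 : ℝ) else 0) = 2 * #(A ∩ B).offDiag := by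
  have h (p : ι × ι) (hp : p ∈ A.offDiag) : ∑ q ∈ B.offDiag,
      (if ({p.1, p.2} : Finset ι) = {q.1, q.2} then (1 : ℝ) else 0) =
        2 * if p ∈ B.offDiag then 1 else 0 := by
    have hsplit (q : ι × ι) : (if ({p.1, p.2} : Finset ι) = {q.1, q.2} then (1 : ℝ) else 0) =
        (if p = q then 1 else 0) + (if p.swap = q then 1 else 0) := by
      have hne : p.1 ≠ p.2 := (mem_offDiag.1 hp).2.2
      simp only [pair_eq_pair_iff, Prod.ext_iff, Prod.fst_swap, Prod.snd_swap]
      split_ifs <;> grind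
    simp only [hsplit, sum_add_distrib, sum_ite_eq, mem_offDiag, Prod.fst_swap, Prod.snd_swap]
    grind
  rw [sum_congr rfl h, ← mul_sum, sum_boole, filter_mem_eq_inter, offDiag_inter]

theorem cast_card_offDiag {ι R : Type*} [Ring R] (A : Finset ι) :
    (#A.offDiag : R) = (#A : R) ^ 2 - #A := by
  rw [offDiag_card, Nat.cast_sub (Nat.le_mul_self _), Nat.cast_mul, sq]

end Finset

structure IsRademacherFamily {Ω Γ : Type*} [MeasurableSpace Ω] (s : Γ → Ω → ℝ) (μ : Measure Ω) :
    Prop where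
  measurable : ∀ γ, Measurable (s γ)
  ae_eq_one_or_neg_one : ∀ᵐ ω ∂μ, ∀ γ, s γ ω = 1 ∨ s γ ω = -1
  integral_eq_zero : ∀ γ, ∫ ω, s γ ω ∂μ = 0
  indep : iIndepFun s μ

/-- The Wick square `:h_A²: = h_A² - |A|` of `h_A = ∑_{γ ∈ A} s_γ` (see `sq_sum_ae_eq`). -/
def normalOrderedSq {Ω Γ : Type*} [DecidableEq Γ] (s : Γ → Ω → ℝ) (A : Finset Γ) (ω : Ω) : ℝ :=
  ∑ p ∈ A.offDiag, ∏ j ∈ {p.1, p.2}, s j ω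

namespace IsRademacherFamily

variable {Ω Γ : Type*} [MeasurableSpace Ω] {μ : Measure Ω} {s : Γ → Ω → ℝ}

theorem of_measure_eq_half [IsProbabilityMeasure μ] [Countable Γ] (hmeas : ∀ γ, Measurable (s γ))
    (hsign : ∀ γ, μ {ω | s γ ω = 1} = 1 / 2 ∧ μ {ω | s γ ω = -1} = 1 / 2)
    (hindep : iIndepFun s μ) : IsRademacherFamily s μ := by
  have hpos γ : MeasurableSet {ω | s γ ω = 1} := hmeas γ (measurableSet_singleton 1)
  have hneg γ : MeasurableSet {ω | s γ ω = -1} := hmeas γ (measurableSet_singleton (-1))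
  have hsupp : ∀ᵐ ω ∂μ, ∀ γ, s γ ω = 1 ∨ s γ ω = -1 := by
    refine ae_all_iff.2 fun γ => ?_
    have hdisj : Disjoint {ω | s γ ω = 1} {ω | s γ ω = -1} :=
      Set.disjoint_left.2 fun ω (h1 : s γ ω = 1) (h2 : s γ ω = -1) => by linarith
    have hunion : μ ({ω | s γ ω = 1} ∪ {ω | s γ ω = -1}) = 1 := by
      rw [measure_union hdisj (hneg γ), (hsign γ).1, (hsign γ).2, ENNReal.add_halves]
    exact (prob_compl_eq_zero_iff ((hpos γ).union (hneg γ))).2 hunion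
  refine ⟨hmeas, hsupp, fun γ => ?_, hindep⟩
  have hsplit : s γ =ᵐ[μ] {ω | s γ ω = 1}.indicator 1 - {ω | s γ ω = -1}.indicator 1 := by
    filter_upwards [hsupp] with ω hω
    rcases hω γ with h | h <;> norm_num [Set.indicator_apply, h]
  rw [integral_congr_ae hsplit, integral_sub' ((integrable_const 1).indicator (hpos γ))
    ((integrable_const 1).indicator (hneg γ)), integral_indicator_one (hpos γ),
    integral_indicator_one (hneg γ), measureReal_def, measureReal_def, (hsign γ).1, (hsign γ).2,
    sub_self]

variable (hs : IsRademacherFamily s μ)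
include hs

theorem ae_mul_self_eq_one : ∀ᵐ ω ∂μ, ∀ γ, s γ ω * s γ ω = 1 := by
  filter_upwards [hs.ae_eq_one_or_neg_one] with ω hω γ
  rcases hω γ with h | h <;> simp [h]

theorem integrable_prod [IsFiniteMeasure μ] (t : Finset Γ) :
    Integrable (fun ω => ∏ j ∈ t, s j ω) μ := by
  refine .of_bound (measurable_fun_prod t fun j _ => hs.measurable j).aestronglyMeasurable 1 ?_
  filter_upwards [hs.ae_eq_one_or_neg_one] with ω hω
  rw [norm_prod]
  exact prod_le_one (fun _ _ => norm_nonneg _) fun j _ => by rcases hω j with h | h <;> simp [h]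

theorem integral_prod [IsProbabilityMeasure μ] [DecidableEq Γ] (t : Finset Γ) :
    ∫ ω, ∏ j ∈ t, s j ω ∂μ = if t = ∅ then 1 else 0 := by
  rcases t.eq_empty_or_nonempty with rfl | ⟨a, ha⟩
  · simp
  rw [if_neg (nonempty_iff_ne_empty.1 ⟨a, ha⟩)]
  have hindep : IndepFun (fun ω => ∏ j ∈ t.erase a, s j ω) (s a) μ := by
    simpa only [← prod_fn] using
      hs.indep.indepFun_finsetProd_of_notMem hs.measurable (notMem_erase a t)
  simp_rw [← prod_erase_mul t _ ha]
  rw [hindep.integral_fun_mul_eq_mul_integral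
    (measurable_fun_prod _ fun j _ => hs.measurable j).aestronglyMeasurable
    (hs.measurable a).aestronglyMeasurable, hs.integral_eq_zero, mul_zero]

theorem prod_mul_prod_ae_eq [DecidableEq Γ] (t u : Finset Γ) :
    (fun ω => (∏ j ∈ t, s j ω) * ∏ j ∈ u, s j ω) =ᵐ[μ] fun ω => ∏ j ∈ symmDiff t u, s j ω := by
  filter_upwards [hs.ae_mul_self_eq_one] with ω hω
  exact prod_mul_prod_eq_prod_symmDiff fun j _ => hω j

theorem integrable_prod_mul_prod [IsFiniteMeasure μ] [DecidableEq Γ] (t u : Finset Γ) :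
    Integrable (fun ω => (∏ j ∈ t, s j ω) * ∏ j ∈ u, s j ω) μ :=
  (hs.integrable_prod (symmDiff t u)).congr (hs.prod_mul_prod_ae_eq t u).symm

theorem integral_prod_mul_prod [IsProbabilityMeasure μ] [DecidableEq Γ] (t u : Finset Γ) :
    ∫ ω, (∏ j ∈ t, s j ω) * ∏ j ∈ u, s j ω ∂μ = if t = u then 1 else 0 := by
  rw [integral_congr_ae (hs.prod_mul_prod_ae_eq t u), hs.integral_prod]
  exact if_congr symmDiff_eq_empty rfl rfl

variable [DecidableEq Γ]

theorem sq_sum_ae_eq (A : Finset Γ) :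
    (fun ω => (∑ γ ∈ A, s γ ω) ^ 2) =ᵐ[μ] fun ω => #A + normalOrderedSq s A ω := by
  filter_upwards [hs.ae_mul_self_eq_one] with ω hω
  rw [sq_sum_eq_sum_sq_add_sum_offDiag, normalOrderedSq]
  congr 1
  · simp [sq, hω]
  · exact sum_congr rfl fun p hp => (prod_pair (f := (s · ω)) (mem_offDiag.1 hp).2.2).symm

theorem integrable_normalOrderedSq [IsFiniteMeasure μ] (A : Finset Γ) :
    Integrable (normalOrderedSq s A) μ :=
  integrable_finsetSum _ fun _ _ => hs.integrable_prod _

theorem integral_normalOrderedSq [IsProbabilityMeasure μ] (A : Finset Γ) :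
    ∫ ω, normalOrderedSq s A ω ∂μ = 0 := by
  simp only [normalOrderedSq]
  rw [integral_finsetSum _ fun _ _ => hs.integrable_prod _]
  exact sum_eq_zero fun p _ => by rw [hs.integral_prod, if_neg (insert_ne_empty _ _)]

theorem integrable_normalOrderedSq_mul [IsFiniteMeasure μ] (A B : Finset Γ) :
    Integrable (fun ω => normalOrderedSq s A ω * normalOrderedSq s B ω) μ := by
  simp only [normalOrderedSq, sum_mul_sum]
  exact integrable_finsetSum _ fun _ _ => integrable_finsetSum _ fun _ _ =>
    hs.integrable_prod_mul_prod _ _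

theorem integral_normalOrderedSq_mul [IsProbabilityMeasure μ] (A B : Finset Γ) :
    ∫ ω, normalOrderedSq s A ω * normalOrderedSq s B ω ∂μ = 2 * #(A ∩ B).offDiag := by
  simp only [normalOrderedSq, sum_mul_sum]
  rw [integral_finsetSum _ fun _ _ => integrable_finsetSum _ fun _ _ =>
    hs.integrable_prod_mul_prod _ _]
  simp_rw [integral_finsetSum _ fun _ _ => hs.integrable_prod_mul_prod _ _,
    hs.integral_prod_mul_prod]
  exact sum_offDiag_sum_offDiag_pair_eq_pair A B

theorem integrable_sq_sum [IsFiniteMeasure μ] (A : Finset Γ) :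
    Integrable (fun ω => (∑ γ ∈ A, s γ ω) ^ 2) μ :=
  ((integrable_const _).add (hs.integrable_normalOrderedSq A)).congr (hs.sq_sum_ae_eq A).symm

theorem integral_sq_sum [IsProbabilityMeasure μ] (A : Finset Γ) :
    ∫ ω, (∑ γ ∈ A, s γ ω) ^ 2 ∂μ = #A := by
  rw [integral_congr_ae (hs.sq_sum_ae_eq A), integral_add (integrable_const _)
    (hs.integrable_normalOrderedSq A), hs.integral_normalOrderedSq, integral_const,
    probReal_univ, one_smul, add_zero]

theorem sq_sum_mul_sq_sum_ae_eq (A B : Finset Γ) :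
    (fun ω => (∑ γ ∈ A, s γ ω) ^ 2 * (∑ γ ∈ B, s γ ω) ^ 2) =ᵐ[μ] fun ω =>
      #A * #B + (#A * normalOrderedSq s B ω + #B * normalOrderedSq s A ω +
        normalOrderedSq s A ω * normalOrderedSq s B ω) := by
  filter_upwards [hs.sq_sum_ae_eq A, hs.sq_sum_ae_eq B] with ω hA hB
  rw [hA, hB]
  ring

theorem integrable_sq_sum_mul_sq_sum [IsFiniteMeasure μ] (A B : Finset Γ) :
    Integrable (fun ω => (∑ γ ∈ A, s γ ω) ^ 2 * (∑ γ ∈ B, s γ ω) ^ 2) μ :=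
  ((integrable_const _).add ((((hs.integrable_normalOrderedSq B).const_mul _).add
    ((hs.integrable_normalOrderedSq A).const_mul _)).add
      (hs.integrable_normalOrderedSq_mul A B))).congr (hs.sq_sum_mul_sq_sum_ae_eq A B).symm

theorem integral_sq_sum_mul_sq_sum [IsProbabilityMeasure μ] (A B : Finset Γ) :
    ∫ ω, (∑ γ ∈ A, s γ ω) ^ 2 * (∑ γ ∈ B, s γ ω) ^ 2 ∂μ =
      #A * #B + (2 * #(A ∩ B) ^ 2 - 2 * #(A ∩ B)) := by
  have hA := (hs.integrable_normalOrderedSq A).const_mul (#B : ℝ)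
  have hB := (hs.integrable_normalOrderedSq B).const_mul (#A : ℝ)
  have hAB := hs.integrable_normalOrderedSq_mul A B
  rw [integral_congr_ae (hs.sq_sum_mul_sq_sum_ae_eq A B), integral_add (integrable_const _)
    (by exact (hB.add hA).add hAB), integral_add (by exact hB.add hA) hAB, integral_add hB hA]
  simp only [integral_const_mul, hs.integral_normalOrderedSq, hs.integral_normalOrderedSq_mul,
    integral_const, probReal_univ, one_smul, cast_card_offDiag]
  ring

variable [Countable Γ]

theorem integrable_and_integral_sq_sum_of_indepFun [IsProbabilityMeasure μ] {S : Ω → Finset Γ}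
    (hS : Measurable S) (hind : IndepFun S (fun ω γ => s γ ω) μ)
    (hint : Integrable (fun ω => (#(S ω) : ℝ)) μ) :
    Integrable (fun ω => (∑ γ ∈ S ω, s γ ω) ^ 2) μ ∧
      ∫ ω, (∑ γ ∈ S ω, s γ ω) ^ 2 ∂μ = ∫ ω, (#(S ω) : ℝ) ∂μ :=
  hind.integrable_comp_and_integral_comp_eq hS.aemeasurable
    (measurable_pi_lambda _ hs.measurable).aemeasurable (f := fun A v => (∑ γ ∈ A, v γ) ^ 2)
    (fun _ _ => sq_nonneg _)
    (measurable_from_prod_countable_right fun _ => by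
      dsimp only [Function.uncurry_apply_pair]; fun_prop)
    (fun A => ⟨hs.integrable_sq_sum A, hs.integral_sq_sum A⟩) hint

theorem integrable_and_integral_sq_sum_mul_sq_sum_of_indepFun [IsProbabilityMeasure μ]
    {S S' : Ω → Finset Γ} (hS : Measurable S) (hS' : Measurable S')
    (hind : IndepFun (fun ω => (S ω, S' ω)) (fun ω γ => s γ ω) μ)
    (hint : Integrable (fun ω => (#(S ω) : ℝ) * #(S' ω) +
      (2 * #(S ω ∩ S' ω) ^ 2 - 2 * #(S ω ∩ S' ω))) μ) :
    Integrable (fun ω => (∑ γ ∈ S ω, s γ ω) ^ 2 * (∑ γ ∈ S' ω, s γ ω) ^ 2) μ ∧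
      ∫ ω, (∑ γ ∈ S ω, s γ ω) ^ 2 * (∑ γ ∈ S' ω, s γ ω) ^ 2 ∂μ =
        ∫ ω, ((#(S ω) : ℝ) * #(S' ω) + (2 * #(S ω ∩ S' ω) ^ 2 - 2 * #(S ω ∩ S' ω))) ∂μ :=
  hind.integrable_comp_and_integral_comp_eq (hS.prodMk hS').aemeasurable
    (measurable_pi_lambda _ hs.measurable).aemeasurable
    (f := fun AB v => (∑ γ ∈ AB.1, v γ) ^ 2 * (∑ γ ∈ AB.2, v γ) ^ 2)
    (fun _ _ => by positivity)
    (measurable_from_prod_countable_right fun _ => by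
      dsimp only [Function.uncurry_apply_pair]; fun_prop)
    (fun AB => ⟨hs.integrable_sq_sum_mul_sq_sum AB.1 AB.2,
      hs.integral_sq_sum_mul_sq_sum AB.1 AB.2⟩) hint

end IsRademacherFamily

section NestingNumbers

variable {Ω Γ : Type*} [MeasurableSpace Ω] {μ : Measure Ω} [Countable Γ] {S S' : Ω → Finset Γ}

theorem memLp_two_card (hS : Measurable S) (h : Integrable (fun ω => (#(S ω) : ℝ) ^ 2) μ) :
    MemLp (fun ω => (#(S ω) : ℝ)) 2 μ :=
  (memLp_two_iff_integrable_sq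
    ((Measurable.of_discrete (f := fun A : Finset Γ => (#A : ℝ))).comp hS).aestronglyMeasurable).2 h

theorem memLp_two_card_inter [DecidableEq Γ] (hS : Measurable S) (hS' : Measurable S')
    (h : Integrable (fun ω => (#(S ω) : ℝ) ^ 2) μ) : MemLp (fun ω => (#(S ω ∩ S' ω) : ℝ)) 2 μ :=
  (memLp_two_card hS h).mono
    ((Measurable.of_discrete (f := fun p : Finset Γ × Finset Γ => (#(p.1 ∩ p.2) : ℝ))).comp
      (hS.prodMk hS')).aestronglyMeasurable
    (ae_of_all _ fun _ => by simpa using card_le_card inter_subset_left)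

end NestingNumbers

/-- In the loop-sign model, with `ψ(x) = h(x)² − E[h(x)²]` (the normal-ordered
square of the height) and `φ(x) = N(x) − E[N(x)]` (the nesting field), and assuming
`E[N(x)²] < ∞`, `E[N(y)²] < ∞`, one has
`E[ψ(x)ψ(y)] = E[φ(x)φ(y)] + E[2 N(x,y)² − 2 N(x,y)]`. -/
theorem loopSign_psi_phi_covariance
    {Ω : Type*} [MeasurableSpace Ω] (μ : Measure Ω) [IsProbabilityMeasure μ]
    {Γ : Type*} [Countable Γ] [DecidableEq Γ] {X : Type*}
    (S : X → Ω → Finset Γ) (s : Γ → Ω → ℝ)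
    (hSmeas : ∀ x : X, Measurable (S x))
    (hsmeas : ∀ γ : Γ, Measurable (s γ))
    (hsign : ∀ γ : Γ, μ {ω | s γ ω = 1} = 1/2 ∧ μ {ω | s γ ω = -1} = 1/2)
    (hsindep : iIndepFun (m := fun _ : Γ => (inferInstance : MeasurableSpace ℝ)) s μ)
    (hSsindep : IndepFun (fun ω (x : X) => S x ω) (fun ω (γ : Γ) => s γ ω) μ)
    (x y : X)
    (hx : Integrable (fun ω => ((S x ω).card : ℝ) ^ 2) μ)
    (hy : Integrable (fun ω => ((S y ω).card : ℝ) ^ 2) μ)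
    -- the centered fields:
    (ψx ψy φx φy : Ω → ℝ)
    (hψx : ψx = fun ω => (∑ γ ∈ S x ω, s γ ω) ^ 2 - ∫ ω', (∑ γ ∈ S x ω', s γ ω') ^ 2 ∂μ)
    (hψy : ψy = fun ω => (∑ γ ∈ S y ω, s γ ω) ^ 2 - ∫ ω', (∑ γ ∈ S y ω', s γ ω') ^ 2 ∂μ)
    (hφx : φx = fun ω => ((S x ω).card : ℝ) - ∫ ω', ((S x ω').card : ℝ) ∂μ)
    (hφy : φy = fun ω => ((S y ω).card : ℝ) - ∫ ω', ((S y ω').card : ℝ) ∂μ) :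
    ∫ ω, ψx ω * ψy ω ∂μ
      = ∫ ω, φx ω * φy ω ∂μ
        + ∫ ω, (2 * ((S x ω ∩ S y ω).card : ℝ) ^ 2 - 2 * ((S x ω ∩ S y ω).card : ℝ)) ∂μ := by
  subst hψx hψy hφx hφy
  beta_reduce
  have hs := IsRademacherFamily.of_measure_eq_half hsmeas hsign hsindep
  have hLx := memLp_two_card (hSmeas x) hx
  have hLy := memLp_two_card (hSmeas y) hy
  have hLxy := memLp_two_card_inter (hSmeas x) (hSmeas y) hx
  have hNx := hLx.integrable one_le_two
  have hNy := hLy.integrable one_le_two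
  have hNxNy : Integrable (fun ω => (#(S x ω) : ℝ) * #(S y ω)) μ := hLx.integrable_mul hLy
  have hK : Integrable (fun ω => 2 * (#(S x ω ∩ S y ω) : ℝ) ^ 2 - 2 * #(S x ω ∩ S y ω)) μ :=
    (((memLp_two_iff_integrable_sq hLxy.1).1 hLxy).const_mul 2).sub
      ((hLxy.integrable one_le_two).const_mul 2)
  obtain ⟨hx2int, hx2⟩ := hs.integrable_and_integral_sq_sum_of_indepFun (hSmeas x)
    (hSsindep.comp (measurable_pi_apply x) measurable_id) hNx
  obtain ⟨hy2int, hy2⟩ := hs.integrable_and_integral_sq_sum_of_indepFun (hSmeas y)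
    (hSsindep.comp (measurable_pi_apply y) measurable_id) hNy
  obtain ⟨hxyint, hxy⟩ := hs.integrable_and_integral_sq_sum_mul_sq_sum_of_indepFun (hSmeas x)
    (hSmeas y) (hSsindep.comp ((measurable_pi_apply x).prodMk (measurable_pi_apply y))
      measurable_id) (hNxNy.add hK)
  rw [integral_sub_integral_mul_sub_integral hx2int hy2int hxyint, hxy, integral_add hNxNy hK,
    integral_sub_integral_mul_sub_integral hNx hNy hNxNy, hx2, hy2]
  ring
end

section
/- Let x, x', y, y' be points with E[N(z)²] < ∞ for each z ∈ {x, x', y, y'}. Define the centered two-point fields ψ'(x) = h(x)h(x') − E[h(x)h(x')] and φ'(x) = N(x,x') − E[N(x,x')], and analogously ψ'(y) = h(y)h(y') − E[h(y)h(y')] and φ'(y) = N(y,y') − E[N(y,y')]. Then E[ψ'(x)ψ'(y)] = E[φ'(x)φ'(y)] + E[ N(x,y)N(x',y') + N(x,y')N(x',y) − 2·N(x,x',y,y') ]. -/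
/-!
For fixed loop sets `A, B, C, D` and `h_A = ∑_{γ ∈ A} s_γ`, independence and `s_γ² = 1` give
`E[s_a s_b] = δ_ab` and `E[s_a s_b s_c s_d] = δ_ab δ_cd + δ_ac δ_bd + δ_ad δ_bc - 2 δ_abcd`
(the three pairings count a quadruple of equal indices three times instead of once), hence
`E[h_A h_B] = |A ∩ B|` and
`E[h_A h_B h_C h_D] = |A∩B| |C∩D| + |A∩C| |B∩D| + |A∩D| |B∩C| - 2 |A∩B∩C∩D|`.
As the signs are independent of the loops, the joint law is a product and Fubini lets us average
over the signs first, so these identities hold with `A = S_x`, ... inside the expectation over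
the loops. Integrability comes from `|h_A h_B h_C h_D| ≤ (h_A⁴ + ⋯ + h_D⁴) / 4` and
`E[h_A⁴] ≤ 3 |A|²`, which is where `E[N(z)²] < ∞` enters. Expanding both covariances then
leaves exactly the extra term.
-/

open MeasureTheory ProbabilityTheory

lemma abs_mul_le_add_sq_div_two (x y : ℝ) : |x * y| ≤ (x ^ 2 + y ^ 2) / 2 := by
  rw [abs_mul, ← sq_abs x, ← sq_abs y]
  linarith [two_mul_le_add_sq |x| |y|]

lemma abs_mul_mul_mul_le (a b c d : ℝ) :
    |a * b * c * d| ≤ (a ^ 4 + b ^ 4 + c ^ 4 + d ^ 4) / 4 := by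
  calc |a * b * c * d| = |(a * b) * (c * d)| := by rw [mul_assoc (a * b)]
    _ ≤ ((a * b) ^ 2 + (c * d) ^ 2) / 2 := abs_mul_le_add_sq_div_two _ _
    _ ≤ (a ^ 4 + b ^ 4 + c ^ 4 + d ^ 4) / 4 := by
      nlinarith [two_mul_le_add_sq (a ^ 2) (b ^ 2), two_mul_le_add_sq (c ^ 2) (d ^ 2)]

lemma Measurable.finset_inter {α β : Type*} [DecidableEq α] [MeasurableSpace β]
    {f g : β → Finset α} (hf : Measurable f) (hg : Measurable g) :
    Measurable fun b => f b ∩ g b := by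
  simp only [measurable_finset_iff, Finset.mem_inter] at hf hg ⊢
  exact fun a => (hf a).and (hg a)

section Expectation

variable {Ω : Type*} [MeasurableSpace Ω] {μ : Measure Ω}

lemma integral_sub_integral_mul_sub_integral_s6 [IsProbabilityMeasure μ] {P R : Ω → ℝ}
    (hPR : Integrable (fun ω => P ω * R ω) μ) (hP : Integrable P μ) (hR : Integrable R μ) :
    ∫ ω, (P ω - ∫ ω', P ω' ∂μ) * (R ω - ∫ ω', R ω' ∂μ) ∂μ
      = ∫ ω, P ω * R ω ∂μ - (∫ ω, P ω ∂μ) * ∫ ω, R ω ∂μ := by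
  simp_rw [sub_mul, mul_sub]
  rw [integral_sub, integral_sub, integral_sub]
  · simp only [integral_mul_const, integral_const_mul, integral_const, probReal_univ, one_smul]
    ring
  all_goals fun_prop

lemma memLp_two_card_of_subset {Γ : Type*} [Countable Γ] {T U : Ω → Finset Γ}
    (hT : Measurable T) (hU : Integrable (fun ω => ((U ω).card : ℝ) ^ 2) μ)
    (hTU : ∀ ω, T ω ⊆ U ω) : MemLp (fun ω => ((T ω).card : ℝ)) 2 μ := by
  have hmeas : AEStronglyMeasurable (fun ω => ((T ω).card : ℝ)) μ :=
    ((Measurable.of_discrete (f := fun A : Finset Γ => (A.card : ℝ))).comp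
      hT).aestronglyMeasurable
  refine (memLp_two_iff_integrable_sq hmeas).2
    (hU.mono' (hmeas.pow 2) (ae_of_all _ fun ω => ?_))
  have hcard : ((T ω).card : ℝ) ≤ (U ω).card := by
    exact_mod_cast Finset.card_le_card (hTU ω)
  rw [Real.norm_eq_abs, abs_of_nonneg (by positivity)]
  gcongr

lemma ProbabilityTheory.IndepFun.integrable_and_integral_eq_integral_integral
    [IsFiniteMeasure μ] {E W : Type*} [MeasurableSpace E] [Countable E]
    [DiscreteMeasurableSpace E] [MeasurableSpace W]
    {Q : Ω → E} {U : Ω → W} (hQ : Measurable Q) (hU : Measurable U) (hQU : IndepFun Q U μ)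
    {Φ : E → W → ℝ} (hΦ : ∀ v, Measurable (Φ v))
    (hΦint : ∀ v, Integrable (fun ω => Φ v (U ω)) μ)
    {g : E → ℝ} (hΦg : ∀ v, ∫ ω, ‖Φ v (U ω)‖ ∂μ ≤ g v)
    (hg : Integrable (fun ω => g (Q ω)) μ) :
    Integrable (fun ω => Φ (Q ω) (U ω)) μ ∧
      ∫ ω, Φ (Q ω) (U ω) ∂μ = ∫ ω, ∫ ω', Φ (Q ω) (U ω') ∂μ ∂μ := by
  have hΨ : Measurable fun p : E × W => Φ p.1 p.2 := measurable_from_prod_countable_right hΦ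
  have hmap : μ.map (fun ω => (Q ω, U ω)) = (μ.map Q).prod (μ.map U) :=
    (indepFun_iff_map_prod_eq_prod_map_map hQ.aemeasurable hU.aemeasurable).1 hQU
  have hQUmeas : AEMeasurable (fun ω => (Q ω, U ω)) μ := hQ.aemeasurable.prodMk hU.aemeasurable
  have hsection (v : E) : ∫ u, Φ v u ∂(μ.map U) = ∫ ω, Φ v (U ω) ∂μ :=
    integral_map hU.aemeasurable (hΦ v).aestronglyMeasurable
  have hprod : Integrable (fun p : E × W => Φ p.1 p.2) ((μ.map Q).prod (μ.map U)) := by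
    refine (integrable_prod_iff hΨ.aestronglyMeasurable).2 ⟨ae_of_all _ fun v => ?_, ?_⟩
    · exact (integrable_map_measure (hΦ v).aestronglyMeasurable hU.aemeasurable).2 (hΦint v)
    refine ((integrable_map_measure Measurable.of_discrete.aestronglyMeasurable
      hQ.aemeasurable).2 hg).mono' Measurable.of_discrete.aestronglyMeasurable
      (ae_of_all _ fun v => ?_)
    rw [Real.norm_eq_abs, abs_of_nonneg (integral_nonneg fun _ => norm_nonneg _),
      integral_map hU.aemeasurable (hΦ v).norm.aestronglyMeasurable]
    exact hΦg v
  have hjoint : Integrable (fun p : E × W => Φ p.1 p.2) (μ.map fun ω => (Q ω, U ω)) := by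
    rwa [hmap]
  refine ⟨(integrable_map_measure hΨ.aestronglyMeasurable hQUmeas).1 hjoint, ?_⟩
  rw [← integral_map hQUmeas hΨ.aestronglyMeasurable, hmap, integral_prod _ hprod]
  simp only [hsection]
  exact integral_map hQ.aemeasurable Measurable.of_discrete.aestronglyMeasurable

end Expectation

section Sign

variable {Ω Γ : Type*} [MeasurableSpace Ω] {μ : Measure Ω} [IsProbabilityMeasure μ]
  {s : Γ → Ω → ℝ} (hsmeas : ∀ γ, Measurable (s γ))
  (hsign : ∀ γ, μ {ω | s γ ω = 1} = 1 / 2 ∧ μ {ω | s γ ω = -1} = 1 / 2)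
include hsmeas hsign

lemma ae_sign_eq_one_or_neg_one (γ : Γ) : ∀ᵐ ω ∂μ, s γ ω = 1 ∨ s γ ω = -1 := by
  have hone : MeasurableSet {ω | s γ ω = 1} := hsmeas γ (measurableSet_singleton 1)
  have hneg : MeasurableSet {ω | s γ ω = -1} := hsmeas γ (measurableSet_singleton (-1))
  have hunion : {ω | s γ ω = 1 ∨ s γ ω = -1} = {ω | s γ ω = 1} ∪ {ω | s γ ω = -1} :=
    Set.ofPred_or
  rw [ae_iff_measure_eq (hunion ▸ (hone.union hneg).nullMeasurableSet), measure_univ, hunion,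
    measure_union _ hneg, (hsign γ).1, (hsign γ).2, ENNReal.add_halves]
  exact Set.disjoint_left.2 fun ω (h1 : s γ ω = 1) (h2 : s γ ω = -1) => by linarith

lemma integral_sign (γ : Γ) : ∫ ω, s γ ω ∂μ = 0 := by
  have hone : MeasurableSet {ω | s γ ω = 1} := hsmeas γ (measurableSet_singleton 1)
  have hs : s γ =ᵐ[μ] fun ω => 2 * {ω | s γ ω = 1}.indicator 1 ω - 1 := by
    filter_upwards [ae_sign_eq_one_or_neg_one hsmeas hsign γ] with ω h
    rcases h with h | h <;> norm_num [h, Set.indicator]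
  rw [integral_congr_ae hs, integral_sub (((integrable_indicator_iff hone).2
      (integrable_const 1).integrableOn).const_mul 2) (integrable_const 1),
    integral_const_mul, integral_indicator_one hone]
  simp [measureReal_def, (hsign γ).1]

lemma integral_eq_of_eq_sign_mul_self_mul (γ : Γ) {f g : Ω → ℝ}
    (hfg : ∀ ω, f ω = s γ ω * s γ ω * g ω) : ∫ ω, f ω ∂μ = ∫ ω, g ω ∂μ := by
  refine integral_congr_ae ?_
  filter_upwards [ae_sign_eq_one_or_neg_one hsmeas hsign γ] with ω h
  rcases h with h | h <;> simp [hfg, h]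

lemma memLp_top_sign (γ : Γ) : MemLp (s γ) ⊤ μ := by
  refine memLp_top_of_bound (hsmeas γ).aestronglyMeasurable 1 ?_
  filter_upwards [ae_sign_eq_one_or_neg_one hsmeas hsign γ] with ω h
  rcases h with h | h <;> simp [h]

lemma memLp_top_sum_sign (A : Finset Γ) : MemLp (fun ω => ∑ γ ∈ A, s γ ω) ⊤ μ :=
  memLp_finsetSum A fun γ _ => memLp_top_sign hsmeas hsign γ

lemma integrable_sum_sign_mul (A B : Finset Γ) :
    Integrable (fun ω => (∑ γ ∈ A, s γ ω) * (∑ γ ∈ B, s γ ω)) μ :=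
  ((memLp_top_sum_sign hsmeas hsign B).mul' (memLp_top_sum_sign hsmeas hsign A)).integrable
    le_top

lemma integrable_sum_sign_mul4 (A B C D : Finset Γ) :
    Integrable (fun ω =>
      (∑ γ ∈ A, s γ ω) * (∑ γ ∈ B, s γ ω) * (∑ γ ∈ C, s γ ω) * (∑ γ ∈ D, s γ ω)) μ := by
  have h := memLp_top_sum_sign hsmeas hsign (μ := μ)
  exact ((h D).mul' ((h C).mul' ((h B).mul' (h A) (r := ⊤)) (r := ⊤))).integrable le_top

variable (hsindep : iIndepFun s μ)
include hsindep

lemma integral_sign_mul_sign [DecidableEq Γ] (a b : Γ) :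
    ∫ ω, s a ω * s b ω ∂μ = if a = b then 1 else 0 := by
  split_ifs with hab
  · subst hab
    simpa using integral_eq_of_eq_sign_mul_self_mul hsmeas hsign a (g := 1) (by simp)
  · rw [← Pi.mul_def (s a) (s b), ((hsindep.indepFun hab).integral_mul_eq_mul_integral
      (hsmeas a).aestronglyMeasurable (hsmeas b).aestronglyMeasurable),
      integral_sign hsmeas hsign a, zero_mul]

lemma integral_sign_mul_eq_zero {a b c d : Γ} (hb : a ≠ b) (hc : a ≠ c) (hd : a ≠ d) :
    ∫ ω, s a ω * s b ω * s c ω * s d ω ∂μ = 0 := by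
  classical
  have hmem : a ∈ ({a} : Finset Γ) ∧ b ∈ ({b, c, d} : Finset Γ) ∧
      c ∈ ({b, c, d} : Finset Γ) ∧ d ∈ ({b, c, d} : Finset Γ) := by simp
  have hpick : Measurable fun t : ({a} : Finset Γ) → ℝ => t ⟨a, hmem.1⟩ :=
    measurable_pi_apply _
  have hprod : Measurable fun t : ({b, c, d} : Finset Γ) → ℝ =>
      t ⟨b, hmem.2.1⟩ * t ⟨c, hmem.2.2.1⟩ * t ⟨d, hmem.2.2.2⟩ := by fun_prop
  have hindep : IndepFun (s a) (fun ω => s b ω * s c ω * s d ω) μ :=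
    (hsindep.indepFun_finset {a} {b, c, d} (by simp [hb, hc, hd]) hsmeas).comp hpick hprod
  have hsplit := hindep.integral_mul_eq_mul_integral (hsmeas a).aestronglyMeasurable
    (((hsmeas b).mul (hsmeas c)).mul (hsmeas d)).aestronglyMeasurable
  simp only [Pi.mul_def, integral_sign hsmeas hsign a, zero_mul] at hsplit
  simpa only [mul_assoc] using hsplit

lemma integral_sign_mul_sign_mul_sign_mul_sign [DecidableEq Γ] (a b c d : Γ) :
    ∫ ω, s a ω * s b ω * s c ω * s d ω ∂μ
      = (if a = b then 1 else 0) * (if c = d then 1 else 0)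
        + (if a = c then 1 else 0) * (if b = d then 1 else 0)
        + (if a = d then 1 else 0) * (if b = c then 1 else 0)
        - 2 * ((if a = b then 1 else 0) * (if a = c then 1 else 0)
          * (if a = d then 1 else 0)) := by
  by_cases hab : a = b
  · subst hab
    rw [integral_eq_of_eq_sign_mul_self_mul hsmeas hsign a (g := fun ω => s c ω * s d ω)
      (fun ω => by ring), integral_sign_mul_sign hsmeas hsign hsindep]
    split_ifs <;> grind
  by_cases hac : a = c
  · subst hac
    rw [integral_eq_of_eq_sign_mul_self_mul hsmeas hsign a (g := fun ω => s b ω * s d ω)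
      (fun ω => by ring), integral_sign_mul_sign hsmeas hsign hsindep]
    split_ifs <;> grind
  by_cases had : a = d
  · subst had
    rw [integral_eq_of_eq_sign_mul_self_mul hsmeas hsign a (g := fun ω => s b ω * s c ω)
      (fun ω => by ring), integral_sign_mul_sign hsmeas hsign hsindep]
    split_ifs <;> grind
  rw [integral_sign_mul_eq_zero hsmeas hsign hsindep hab hac had]
  simp [hab, hac, had]

lemma integral_sum_sign_mul_sum_sign [DecidableEq Γ] (A B : Finset Γ) :
    ∫ ω, (∑ γ ∈ A, s γ ω) * (∑ γ ∈ B, s γ ω) ∂μ = (A ∩ B).card := by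
  have hint (a b : Γ) : Integrable (fun ω => s a ω * s b ω) μ :=
    ((memLp_top_sign hsmeas hsign b).mul' (memLp_top_sign hsmeas hsign a)).integrable le_top
  simp only [Finset.sum_mul_sum]
  rw [integral_finsetSum _ fun a _ => integrable_finsetSum _ fun b _ => hint a b]
  simp [integral_finsetSum _ fun b _ => hint _ b, integral_sign_mul_sign hsmeas hsign hsindep]

lemma integral_sum_sign_mul4 [DecidableEq Γ] (A B C D : Finset Γ) :
    ∫ ω, (∑ γ ∈ A, s γ ω) * (∑ γ ∈ B, s γ ω) * (∑ γ ∈ C, s γ ω) * (∑ γ ∈ D, s γ ω) ∂μ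
      = (A ∩ B).card * (C ∩ D).card + (A ∩ C).card * (B ∩ D).card
        + (A ∩ D).card * (B ∩ C).card - 2 * (A ∩ B ∩ C ∩ D).card := by
  have hint (a b c d : Γ) : Integrable (fun ω => s a ω * s b ω * s c ω * s d ω) μ := by
    have h := memLp_top_sign hsmeas hsign (μ := μ)
    exact ((h d).mul' ((h c).mul' ((h b).mul' (h a) (r := ⊤)) (r := ⊤))).integrable le_top
  simp only [Finset.sum_mul, Finset.mul_sum]
  simp (disch := intro _ _; repeat (first | exact hint _ _ _ _ |
    (apply integrable_finsetSum; intro _ _))) only [integral_finsetSum]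
  simp only [integral_sign_mul_sign_mul_sign_mul_sign hsmeas hsign hsindep,
    Finset.sum_add_distrib, Finset.sum_sub_distrib, ← Finset.mul_sum]
  simp [Finset.inter_comm, Finset.inter_left_comm]
  ring

lemma integral_norm_sum_sign_mul_le [DecidableEq Γ] (A B : Finset Γ) :
    ∫ ω, ‖(∑ γ ∈ A, s γ ω) * (∑ γ ∈ B, s γ ω)‖ ∂μ ≤ (A.card + B.card) / 2 := by
  have hA := integrable_sum_sign_mul hsmeas hsign A A
  have hB := integrable_sum_sign_mul hsmeas hsign B B
  calc ∫ ω, ‖(∑ γ ∈ A, s γ ω) * (∑ γ ∈ B, s γ ω)‖ ∂μ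
      ≤ ∫ ω, ((∑ γ ∈ A, s γ ω) * (∑ γ ∈ A, s γ ω)
          + (∑ γ ∈ B, s γ ω) * (∑ γ ∈ B, s γ ω)) / 2 ∂μ := by
        refine integral_mono (integrable_sum_sign_mul hsmeas hsign A B).norm
          ((hA.add hB).div_const 2) fun ω => ?_
        simpa only [Real.norm_eq_abs, sq] using abs_mul_le_add_sq_div_two _ _
    _ = (A.card + B.card) / 2 := by
        rw [integral_div, integral_add hA hB,
          integral_sum_sign_mul_sum_sign hsmeas hsign hsindep,
          integral_sum_sign_mul_sum_sign hsmeas hsign hsindep, Finset.inter_self,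
          Finset.inter_self]

lemma integral_norm_sum_sign_mul4_le [DecidableEq Γ] (A B C D : Finset Γ) :
    ∫ ω, ‖(∑ γ ∈ A, s γ ω) * (∑ γ ∈ B, s γ ω) * (∑ γ ∈ C, s γ ω) * (∑ γ ∈ D, s γ ω)‖ ∂μ
      ≤ 3 / 4 * ((A.card : ℝ) ^ 2 + B.card ^ 2 + C.card ^ 2 + D.card ^ 2) := by
  have h4 (E : Finset Γ) : Integrable (fun ω => (∑ γ ∈ E, s γ ω) ^ 4) μ := by
    simpa only [pow_succ, pow_zero, one_mul] using
      integrable_sum_sign_mul4 hsmeas hsign E E E E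
  have hmoment (E : Finset Γ) : ∫ ω, (∑ γ ∈ E, s γ ω) ^ 4 ∂μ ≤ 3 * (E.card : ℝ) ^ 2 := by
    simp only [pow_succ, pow_zero, one_mul]
    rw [integral_sum_sign_mul4 hsmeas hsign hsindep]
    simp only [Finset.inter_self]
    nlinarith [Nat.cast_nonneg (α := ℝ) E.card]
  calc _ ≤ ∫ ω, ((∑ γ ∈ A, s γ ω) ^ 4 + (∑ γ ∈ B, s γ ω) ^ 4 + (∑ γ ∈ C, s γ ω) ^ 4
          + (∑ γ ∈ D, s γ ω) ^ 4) / 4 ∂μ :=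
        integral_mono (integrable_sum_sign_mul4 hsmeas hsign A B C D).norm
          ((((h4 A).add (h4 B)).add (h4 C)).add (h4 D) |>.div_const 4)
          fun ω => abs_mul_mul_mul_le _ _ _ _
    _ = (∫ ω, (∑ γ ∈ A, s γ ω) ^ 4 ∂μ + ∫ ω, (∑ γ ∈ B, s γ ω) ^ 4 ∂μ
          + ∫ ω, (∑ γ ∈ C, s γ ω) ^ 4 ∂μ + ∫ ω, (∑ γ ∈ D, s γ ω) ^ 4 ∂μ) / 4 := by
        rw [integral_div, integral_add, integral_add, integral_add] <;> fun_prop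
    _ ≤ 3 / 4 * ((A.card : ℝ) ^ 2 + B.card ^ 2 + C.card ^ 2 + D.card ^ 2) := by
        linarith [hmoment A, hmoment B, hmoment C, hmoment D]

end Sign

section LoopSign

variable {Ω : Type*} [MeasurableSpace Ω] {μ : Measure Ω}
  {Γ : Type*} [Countable Γ] [DecidableEq Γ] {X : Type*} {S : X → Ω → Finset Γ} {s : Γ → Ω → ℝ}

lemma memLp_two_card_inter_s6 (hSmeas : ∀ x, Measurable (S x)) {z : X}
    (hz : Integrable (fun ω => ((S z ω).card : ℝ) ^ 2) μ) (w : X) :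
    MemLp (fun ω => ((S z ω ∩ S w ω).card : ℝ)) 2 μ :=
  memLp_two_card_of_subset ((hSmeas z).finset_inter (hSmeas w)) hz
    fun _ => Finset.inter_subset_left

lemma integrable_card_inter_mul_card_inter [IsFiniteMeasure μ] (hSmeas : ∀ x, Measurable (S x))
    {z z' : X} (hz : Integrable (fun ω => ((S z ω).card : ℝ) ^ 2) μ)
    (hz' : Integrable (fun ω => ((S z' ω).card : ℝ) ^ 2) μ) (w w' : X) :
    Integrable (fun ω => ((S z ω ∩ S w ω).card : ℝ) * ((S z' ω ∩ S w' ω).card : ℝ)) μ :=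
  (memLp_two_card_inter_s6 hSmeas hz w).integrable_mul (memLp_two_card_inter_s6 hSmeas hz' w')

variable [IsProbabilityMeasure μ] (hSmeas : ∀ x, Measurable (S x))
  (hsmeas : ∀ γ, Measurable (s γ))
  (hsign : ∀ γ, μ {ω | s γ ω = 1} = 1 / 2 ∧ μ {ω | s γ ω = -1} = 1 / 2)
  (hsindep : iIndepFun s μ)
  (hSsindep : IndepFun (fun ω (x : X) => S x ω) (fun ω (γ : Γ) => s γ ω) μ)
include hSmeas hsmeas hsign hsindep hSsindep

lemma integrable_and_integral_height_mul_height {z w : X}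
    (hz : Integrable (fun ω => ((S z ω).card : ℝ) ^ 2) μ)
    (hw : Integrable (fun ω => ((S w ω).card : ℝ) ^ 2) μ) :
    Integrable (fun ω => (∑ γ ∈ S z ω, s γ ω) * (∑ γ ∈ S w ω, s γ ω)) μ ∧
      ∫ ω, (∑ γ ∈ S z ω, s γ ω) * (∑ γ ∈ S w ω, s γ ω) ∂μ
        = ∫ ω, ((S z ω ∩ S w ω).card : ℝ) ∂μ := by
  have hcard (v : X) (hv : Integrable (fun ω => ((S v ω).card : ℝ) ^ 2) μ) :
      Integrable (fun ω => ((S v ω).card : ℝ)) μ :=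
    (memLp_two_card_of_subset (hSmeas v) hv fun _ => subset_rfl).integrable one_le_two
  have hindep : IndepFun (fun ω => (S z ω, S w ω)) (fun ω γ => s γ ω) μ :=
    hSsindep.comp (φ := fun f => (f z, f w)) (by fun_prop) measurable_id
  obtain ⟨hint, heq⟩ := hindep.integrable_and_integral_eq_integral_integral
    ((hSmeas z).prodMk (hSmeas w)) (measurable_pi_lambda _ hsmeas)
    (Φ := fun v u => (∑ γ ∈ v.1, u γ) * (∑ γ ∈ v.2, u γ))
    (fun v => by fun_prop) (fun v => integrable_sum_sign_mul hsmeas hsign v.1 v.2)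
    (fun v => integral_norm_sum_sign_mul_le hsmeas hsign hsindep v.1 v.2)
    (((hcard z hz).add (hcard w hw)).div_const 2)
  exact ⟨hint, heq.trans (integral_congr_ae (ae_of_all _ fun ω =>
    integral_sum_sign_mul_sum_sign hsmeas hsign hsindep _ _))⟩

lemma integrable_and_integral_height_mul4 {x x' y y' : X}
    (hx : Integrable (fun ω => ((S x ω).card : ℝ) ^ 2) μ)
    (hx' : Integrable (fun ω => ((S x' ω).card : ℝ) ^ 2) μ)
    (hy : Integrable (fun ω => ((S y ω).card : ℝ) ^ 2) μ)
    (hy' : Integrable (fun ω => ((S y' ω).card : ℝ) ^ 2) μ) :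
    Integrable (fun ω => (∑ γ ∈ S x ω, s γ ω) * (∑ γ ∈ S x' ω, s γ ω)
        * ((∑ γ ∈ S y ω, s γ ω) * (∑ γ ∈ S y' ω, s γ ω))) μ ∧
      ∫ ω, (∑ γ ∈ S x ω, s γ ω) * (∑ γ ∈ S x' ω, s γ ω)
          * ((∑ γ ∈ S y ω, s γ ω) * (∑ γ ∈ S y' ω, s γ ω)) ∂μ
        = ∫ ω, ((S x ω ∩ S x' ω).card : ℝ) * ((S y ω ∩ S y' ω).card : ℝ) ∂μ
          + ∫ ω, (((S x ω ∩ S y ω).card : ℝ) * ((S x' ω ∩ S y' ω).card : ℝ)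
            + ((S x ω ∩ S y' ω).card : ℝ) * ((S x' ω ∩ S y ω).card : ℝ)
            - 2 * ((S x ω ∩ S x' ω ∩ S y ω ∩ S y' ω).card : ℝ)) ∂μ := by
  have hindep : IndepFun (fun ω => (S x ω, S x' ω, S y ω, S y' ω)) (fun ω γ => s γ ω) μ :=
    hSsindep.comp (φ := fun f => (f x, f x', f y, f y')) (by fun_prop) measurable_id
  obtain ⟨hint, heq⟩ := hindep.integrable_and_integral_eq_integral_integral
    ((hSmeas x).prodMk ((hSmeas x').prodMk ((hSmeas y).prodMk (hSmeas y'))))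
    (measurable_pi_lambda _ hsmeas)
    (Φ := fun v u => (∑ γ ∈ v.1, u γ) * (∑ γ ∈ v.2.1, u γ) * (∑ γ ∈ v.2.2.1, u γ)
      * (∑ γ ∈ v.2.2.2, u γ))
    (fun v => by fun_prop) (fun v => integrable_sum_sign_mul4 hsmeas hsign _ _ _ _)
    (fun v => integral_norm_sum_sign_mul4_le hsmeas hsign hsindep _ _ _ _)
    ((((hx.add hx').add hy).add hy').const_mul (3 / 4))
  have hN4 : Integrable (fun ω => ((S x ω ∩ S x' ω ∩ S y ω ∩ S y' ω).card : ℝ)) μ := by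
    refine (memLp_two_card_of_subset ?_ hx fun ω => ?_).integrable one_le_two
    · exact (((hSmeas x).finset_inter (hSmeas x')).finset_inter (hSmeas y)).finset_inter
        (hSmeas y')
    · exact Finset.inter_subset_left.trans
        (Finset.inter_subset_left.trans Finset.inter_subset_left)
  refine ⟨hint.congr (ae_of_all _ fun ω => mul_assoc _ _ _), ?_⟩
  calc _ = ∫ ω, (∑ γ ∈ S x ω, s γ ω) * (∑ γ ∈ S x' ω, s γ ω) * (∑ γ ∈ S y ω, s γ ω)
        * (∑ γ ∈ S y' ω, s γ ω) ∂μ := by simp only [mul_assoc]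
    _ = ∫ ω, (((S x ω ∩ S x' ω).card : ℝ) * ((S y ω ∩ S y' ω).card : ℝ)
          + (((S x ω ∩ S y ω).card : ℝ) * ((S x' ω ∩ S y' ω).card : ℝ)
            + ((S x ω ∩ S y' ω).card : ℝ) * ((S x' ω ∩ S y ω).card : ℝ)
            - 2 * ((S x ω ∩ S x' ω ∩ S y ω ∩ S y' ω).card : ℝ))) ∂μ :=
        heq.trans (integral_congr_ae (ae_of_all _ fun ω =>
          (integral_sum_sign_mul4 hsmeas hsign hsindep _ _ _ _).trans (by ring)))
    _ = _ := integral_add (integrable_card_inter_mul_card_inter hSmeas hx hy x' y')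
        (((integrable_card_inter_mul_card_inter hSmeas hx hx' y y').add
          (integrable_card_inter_mul_card_inter hSmeas hx hx' y' y)).sub (hN4.const_mul 2))

end LoopSign

/-- In the loop-sign model, with two-point centered fields
`ψ'(x) = h(x)h(x') − E[h(x)h(x')]`, `φ'(x) = N(x,x') − E[N(x,x')]` (and analogously at `y`),
and assuming `E[N(z)²] < ∞` for `z ∈ {x, x', y, y'}`, one has
`E[ψ'(x)ψ'(y)] = E[φ'(x)φ'(y)] + E[N(x,y)N(x',y') + N(x,y')N(x',y) − 2 N(x,x',y,y')]`. -/
theorem loopSign_twoPoint_psi_phi_covariance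
    {Ω : Type*} [MeasurableSpace Ω] (μ : Measure Ω) [IsProbabilityMeasure μ]
    {Γ : Type*} [Countable Γ] [DecidableEq Γ] {X : Type*}
    (S : X → Ω → Finset Γ) (s : Γ → Ω → ℝ)
    (hSmeas : ∀ x : X, Measurable (S x))
    (hsmeas : ∀ γ : Γ, Measurable (s γ))
    (hsign : ∀ γ : Γ, μ {ω | s γ ω = 1} = 1/2 ∧ μ {ω | s γ ω = -1} = 1/2)
    (hsindep : iIndepFun s μ)
    (hSsindep : IndepFun (fun ω (x : X) => S x ω) (fun ω (γ : Γ) => s γ ω) μ)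
    (x x' y y' : X)
    (hx : Integrable (fun ω => ((S x ω).card : ℝ) ^ 2) μ)
    (hx' : Integrable (fun ω => ((S x' ω).card : ℝ) ^ 2) μ)
    (hy : Integrable (fun ω => ((S y ω).card : ℝ) ^ 2) μ)
    (hy' : Integrable (fun ω => ((S y' ω).card : ℝ) ^ 2) μ)
    -- the centered two-point fields:
    (ψx ψy φx φy : Ω → ℝ)
    (hψx : ψx = fun ω => (∑ γ ∈ S x ω, s γ ω) * (∑ γ ∈ S x' ω, s γ ω)
        - ∫ ω', (∑ γ ∈ S x ω', s γ ω') * (∑ γ ∈ S x' ω', s γ ω') ∂μ)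
    (hψy : ψy = fun ω => (∑ γ ∈ S y ω, s γ ω) * (∑ γ ∈ S y' ω, s γ ω)
        - ∫ ω', (∑ γ ∈ S y ω', s γ ω') * (∑ γ ∈ S y' ω', s γ ω') ∂μ)
    (hφx : φx = fun ω => ((S x ω ∩ S x' ω).card : ℝ) - ∫ ω', ((S x ω' ∩ S x' ω').card : ℝ) ∂μ)
    (hφy : φy = fun ω => ((S y ω ∩ S y' ω).card : ℝ) - ∫ ω', ((S y ω' ∩ S y' ω').card : ℝ) ∂μ) :
    ∫ ω, ψx ω * ψy ω ∂μ
      = ∫ ω, φx ω * φy ω ∂μ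
        + ∫ ω, (((S x ω ∩ S y ω).card : ℝ) * ((S x' ω ∩ S y' ω).card : ℝ)
            + ((S x ω ∩ S y' ω).card : ℝ) * ((S x' ω ∩ S y ω).card : ℝ)
            - 2 * ((S x ω ∩ S x' ω ∩ S y ω ∩ S y' ω).card : ℝ)) ∂μ := by
  obtain ⟨hhx, hEhx⟩ := integrable_and_integral_height_mul_height hSmeas hsmeas hsign hsindep
    hSsindep hx hx'
  obtain ⟨hhy, hEhy⟩ := integrable_and_integral_height_mul_height hSmeas hsmeas hsign hsindep
    hSsindep hy hy'
  obtain ⟨hhxy, hEhxy⟩ := integrable_and_integral_height_mul4 hSmeas hsmeas hsign hsindep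
    hSsindep hx hx' hy hy'
  have hNx := (memLp_two_card_inter_s6 hSmeas hx x').integrable one_le_two
  have hNy := (memLp_two_card_inter_s6 hSmeas hy y').integrable one_le_two
  subst hψx hψy hφx hφy
  rw [integral_sub_integral_mul_sub_integral_s6 hhxy hhx hhy, hEhxy, hEhx, hEhy,
    integral_sub_integral_mul_sub_integral_s6
      (integrable_card_inter_mul_card_inter hSmeas hx hy x' y') hNx hNy]
  ring
end

section
/- For all natural numbers n and j, the (2j)-th iterated derivative at t = 0 of the real function t ↦ ((2 + t²)/2)^n equals ((2j)!/2^j) · C(n, j), where C(n, j) is the binomial coefficient. -/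
open Polynomial

lemma iteratedDeriv_polynomial_eval (p : ℝ[X]) (k : ℕ) :
    iteratedDeriv k (fun x : ℝ => p.eval x) = fun x => (derivative^[k] p).eval x := by
  induction k with
  | zero => simp
  | succ k ih =>
      rw [iteratedDeriv_succ, ih, Function.iterate_succ_apply']
      funext x
      exact Polynomial.deriv _

/-- For all `n j : ℕ`, the `(2j)`-th iterated derivative at `t = 0` of
`t ↦ ((2 + t²)/2)^n` equals `((2j)! / 2^j) · C(n, j)`. -/
theorem iteratedDeriv_two_add_sq_div_two_pow (n j : ℕ) :
    iteratedDeriv (2 * j) (fun t : ℝ => ((2 + t ^ 2) / 2) ^ n) 0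
      = ((2 * j).factorial : ℝ) / 2 ^ j * (n.choose j : ℝ) := by
  set p : ℝ[X] := (1 + C (2:ℝ)⁻¹ * X ^ 2) ^ n with hp
  have hf : (fun t : ℝ => ((2 + t ^ 2) / 2) ^ n) = fun t : ℝ => p.eval t := by
    funext t
    have : ((2:ℝ) + t ^ 2) / 2 = 1 + 2⁻¹ * t ^ 2 := by ring
    simp [hp, this]
  have hc : p.coeff (2 * j) = (2:ℝ)⁻¹ ^ j * (n.choose j : ℝ) := by
    rw [hp, add_comm, add_pow, Polynomial.finset_sum_coeff]
    have hterm : ∀ k, ((C (2:ℝ)⁻¹ * X ^ 2) ^ k * 1 ^ (n - k) * (n.choose k : ℝ[X])).coeff (2 * j)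
        = if k = j then (2:ℝ)⁻¹ ^ k * (n.choose k : ℝ) else 0 := by
      intro k
      have h1 : (C (2:ℝ)⁻¹ * X ^ 2) ^ k * 1 ^ (n - k) * (n.choose k : ℝ[X])
          = C ((2:ℝ)⁻¹ ^ k * (n.choose k : ℝ)) * X ^ (2 * k) := by
        rw [one_pow, mul_one, mul_pow, ← C_pow, ← pow_mul, map_mul, C_eq_natCast, mul_right_comm]
      rw [h1, Polynomial.coeff_C_mul, Polynomial.coeff_X_pow]
      have h2 : (2 * k = 2 * j) ↔ (k = j) := by omega
      simp [h2, eq_comm]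
    rw [Finset.sum_congr rfl fun k _ => hterm k,
      Finset.sum_ite_eq' (Finset.range (n + 1)) j fun k => (2:ℝ)⁻¹ ^ k * (n.choose k : ℝ)]
    by_cases hj : j ∈ Finset.range (n + 1)
    · simp [hj]
    · simp only [Finset.mem_range, not_lt] at hj
      simp [Nat.choose_eq_zero_of_lt (show n < j by omega), hj, Finset.mem_range]
  have heval : (derivative^[2 * j] p).eval 0 = ((2 * j).factorial : ℝ) * p.coeff (2 * j) := by
    rw [← Polynomial.coeff_zero_eq_eval_zero, Polynomial.coeff_iterate_derivative]
    simp [Nat.descFactorial_self, nsmul_eq_mul]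
  rw [hf, iteratedDeriv_polynomial_eval]
  show (derivative^[2 * j] p).eval 0 = _
  rw [heval, hc, div_eq_mul_inv, inv_pow]
  ring
end

section
/- For every integer n ≥ 2 there exists a constant C > 0 such that for all δ ∈ (0, 1/2): ∫_{[0,1]^n} Π_{i=1}^{n−1} 1/(x_i + x_{i+1} + δ) dx_1 ⋯ dx_n ≤ C. -/
open MeasureTheory

/-!
Apply weighted AM-GM to each factor, giving the edge `(x i, x (i+1))` the weights
`(n+1-i)/(n+2)` and `(i+1)/(n+2)`. Every coordinate then collects the total exponent
`(n+1)/(n+2) < 1`, so uniformly in `δ ≥ 0` the integrand is dominated by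
`∏ j, x j ^ (-(n+1)/(n+2))`, whose integral over the cube is `(n+2)^(n+2)`.
-/

namespace Real

theorem rpow_mul_rpow_le_add {x y a b : ℝ} (hx : 0 ≤ x) (hy : 0 ≤ y) (ha : 0 ≤ a) (hb : 0 ≤ b)
    (hab : a + b = 1) : x ^ a * y ^ b ≤ x + y := by
  have hamgm := geom_mean_le_arith_mean2_weighted ha hb hx hy hab
  nlinarith

theorem prod_rpow_le_prod_add_add (n : ℕ) {x : Fin (n + 2) → ℝ} (hx : ∀ j, 0 ≤ x j) {δ : ℝ}
    (hδ : 0 ≤ δ) :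
    ∏ j, x j ^ (((n : ℝ) + 1) / (n + 2)) ≤ ∏ i : Fin (n + 1), (x i.castSucc + x i.succ + δ) := by
  set α : Fin (n + 2) → ℝ := fun j => ((n : ℝ) + 1 - j) / (n + 2)
  set β : Fin (n + 2) → ℝ := fun j => (j : ℝ) / (n + 2)
  have hαβ : ∀ j, α j + β j = ((n : ℝ) + 1) / (n + 2) := fun j => by
    simp only [α, β]
    ring
  have hsplit : ∀ j, x j ^ (((n : ℝ) + 1) / (n + 2)) = x j ^ α j * x j ^ β j := fun j => by
    rw [← hαβ j, rpow_add' (hx j) (by rw [hαβ j]; positivity)]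
  have hα_last : α (Fin.last (n + 1)) = 0 := by simp [α]
  have hβ_zero : β 0 = 0 := by simp [β]
  calc ∏ j, x j ^ (((n : ℝ) + 1) / (n + 2))
      = (∏ j, x j ^ α j) * ∏ j, x j ^ β j := by
        simp_rw [hsplit, Finset.prod_mul_distrib]
    _ = ∏ i : Fin (n + 1), x i.castSucc ^ α i.castSucc * x i.succ ^ β i.succ := by
        rw [Fin.prod_univ_castSucc (f := fun j => x j ^ α j),
          Fin.prod_univ_succ (f := fun j => x j ^ β j), hα_last, hβ_zero, rpow_zero, rpow_zero,
          mul_one, one_mul, Finset.prod_mul_distrib]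
    _ ≤ ∏ i : Fin (n + 1), (x i.castSucc + x i.succ + δ) := by
        refine Finset.prod_le_prod
          (fun i _ => mul_nonneg (rpow_nonneg (hx _) _) (rpow_nonneg (hx _) _)) fun i _ => ?_
        have hi : (i : ℝ) ≤ n := by exact_mod_cast Nat.lt_succ_iff.mp i.isLt
        refine (rpow_mul_rpow_le_add (hx _) (hx _) ?_ ?_ ?_).trans (le_add_of_nonneg_right hδ)
        · simp only [α, Fin.val_castSucc]; apply div_nonneg <;> linarith
        · simp only [β]; positivity
        · simp only [α, β, Fin.val_castSucc, Fin.val_succ]; push_cast; field_simp; ring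

end Real

theorem integrableOn_Icc_rpow {r : ℝ} (hr : -1 < r) :
    IntegrableOn (fun t : ℝ => t ^ r) (Set.Icc 0 1) := by
  rw [integrableOn_Icc_iff_integrableOn_Ioc,
    ← intervalIntegrable_iff_integrableOn_Ioc_of_le zero_le_one]
  exact intervalIntegral.intervalIntegrable_rpow' hr

theorem setIntegral_Icc_rpow {r : ℝ} (hr : -1 < r) :
    ∫ t in Set.Icc (0 : ℝ) 1, t ^ r = (r + 1)⁻¹ := by
  rw [integral_Icc_eq_integral_Ioc, ← intervalIntegral.integral_of_le zero_le_one,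
    integral_rpow (Or.inl hr), Real.one_rpow, Real.zero_rpow (by linarith)]
  ring

theorem ae_restrict_Icc_pos : ∀ᵐ t ∂(volume.restrict (Set.Icc (0 : ℝ) 1)), 0 < t := by
  rw [← Measure.restrict_congr_set Ioc_ae_eq_Icc]
  filter_upwards [ae_restrict_mem measurableSet_Ioc] with t ht using ht.1

theorem prod_inv_le_prod_rpow_neg (n : ℕ) {x : Fin (n + 2) → ℝ} (hx : ∀ j, 0 < x j) {δ : ℝ}
    (hδ : 0 ≤ δ) :
    ∏ i : Fin (n + 1), (x i.castSucc + x i.succ + δ)⁻¹ ≤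
      ∏ j, x j ^ (-(((n : ℝ) + 1) / (n + 2))) := by
  simp_rw [Real.rpow_neg (hx _).le, Finset.prod_inv_distrib]
  exact inv_anti₀ (Finset.prod_pos fun j _ => Real.rpow_pos_of_pos (hx j) _)
    (Real.prod_rpow_le_prod_add_add n (fun j => (hx j).le) hδ)

theorem volume_restrict_univ_pi {ι α : Type*} [Fintype ι] [MeasureSpace α]
    [SigmaFinite (volume : Measure α)] (s : ι → Set α) :
    (volume : Measure (ι → α)).restrict (Set.univ.pi s) =
      Measure.pi fun i => volume.restrict (s i) := by
  rw [volume_pi, Measure.restrict_pi_pi]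

/-- For every integer `n ≥ 2` (here `n + 2` with `n : ℕ`) there is a constant
`C > 0` such that for all `δ ∈ (0, 1/2)`,
`∫_{[0,1]^n} ∏_{i=1}^{n-1} 1/(x_i + x_{i+1} + δ) dx ≤ C`. -/
theorem chain_integral_bounded (n : ℕ) :
    ∃ C : ℝ, 0 < C ∧ ∀ δ : ℝ, δ ∈ Set.Ioo (0 : ℝ) (1/2) →
      ∫⁻ x in Set.univ.pi (fun _ : Fin (n + 2) => Set.Icc (0 : ℝ) 1),
          ENNReal.ofReal (∏ i : Fin (n + 1), (x i.castSucc + x i.succ + δ)⁻¹)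
        ≤ ENNReal.ofReal C := by
  refine ⟨((n : ℝ) + 2) ^ (n + 2), by positivity, fun δ hδ => ?_⟩
  set r : ℝ := -(((n : ℝ) + 1) / (n + 2))
  have hr : -1 < r := by
    simp only [r, neg_lt_neg_iff]
    rw [div_lt_one (by positivity)]
    linarith
  have hpos : ∀ᵐ x ∂(Measure.pi fun _ : Fin (n + 2) => volume.restrict (Set.Icc (0 : ℝ) 1)),
      ∀ j, 0 < x j :=
    ae_all_iff.2 fun j => Measure.tendsto_eval_ae_ae.eventually ae_restrict_Icc_pos
  rw [volume_restrict_univ_pi]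
  calc _ ≤ ∫⁻ x, ENNReal.ofReal (∏ j, x j ^ r)
          ∂(Measure.pi fun _ : Fin (n + 2) => volume.restrict (Set.Icc (0 : ℝ) 1)) :=
        lintegral_mono_ae <| hpos.mono fun x hx =>
          ENNReal.ofReal_le_ofReal (prod_inv_le_prod_rpow_neg n hx hδ.1.le)
    _ = ENNReal.ofReal ((∫ t in Set.Icc (0 : ℝ) 1, t ^ r) ^ (n + 2)) := by
        rw [← ofReal_integral_eq_lintegral_ofReal
            (Integrable.fintype_prod fun _ => integrableOn_Icc_rpow hr)
            (hpos.mono fun x hx =>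
              Finset.prod_nonneg fun j _ => (Real.rpow_pos_of_pos (hx j) r).le),
          integral_fintype_prod_eq_pow (fun t : ℝ => t ^ r), Fintype.card_fin]
    _ = ENNReal.ofReal (((n : ℝ) + 2) ^ (n + 2)) := by
        rw [setIntegral_Icc_rpow hr]
        congr 2
        simp only [r]
        field_simp
        ring
end

section
/- For every integer n ≥ 2 there exists a constant C > 0 such that for all δ ∈ (0, 1/2): ∫_{[0,1]^n} Π_{i=1}^{n} 1/(x_i + x_{i+1} + δ) dx_1 ⋯ dx_n ≤ C·|log δ|, where indices are taken cyclically, i.e. x_{n+1} := x_1. -/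
/-!
Break the cycle with `1/(a + b + δ) ≤ h(a) h(b)`, where `h(t) = (t + δ)^(-1/2)`, and integrate the
resulting path `h(x₀) K(x₀,x₁) ⋯ K(x_{n-1},x_n) h(x_n)`, `K(a,b) = 1/(a + b + δ)`, one vertex at a
time. The weight `h` passes a Schur test for `K` on `[0,1]`:
`∫₀¹ h(t) K(t,a) dt ≤ ∫₀^∞ dt / (√t (t + a + δ)) ≤ π h(a)` (an arctangent), so each integration
costs a factor `π`, and what is left is `∫₀¹ h² = log((1 + δ)/δ) ≤ 2 |log δ|`.
-/

open MeasureTheory Set ENNReal Real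

section PathChain

variable {α : Type*}

noncomputable def pathChain (K : α → α → ℝ≥0∞) (h : α → ℝ≥0∞) (k : ℕ) (x : Fin (k + 1) → α) :
    ℝ≥0∞ :=
  (∏ i : Fin k, K (x i.castSucc) (x i.succ)) * h (x (Fin.last k))

variable {K : α → α → ℝ≥0∞} {h : α → ℝ≥0∞}

theorem pathChain_zero (x : Fin 1 → α) : pathChain K h 0 x = h (x 0) := by
  simp [pathChain]

theorem pathChain_cons {k : ℕ} (t : α) (y : Fin (k + 1) → α) :
    pathChain K h (k + 1) (Fin.cons t y) = K t (y 0) * pathChain K h k y := by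
  simp only [pathChain, Fin.prod_univ_succ, Fin.cons_zero, Fin.cons_succ, Fin.castSucc_zero,
    ← Fin.succ_castSucc, ← Fin.succ_last, mul_assoc]

theorem prod_cycle_le_mul_pathChain {k : ℕ} (x : Fin (k + 1) → α)
    (hclose : K (x (Fin.last k)) (x 0) ≤ h (x (Fin.last k)) * h (x 0)) :
    ∏ i, K (x i) (x (i + 1)) ≤ h (x 0) * pathChain K h k x := by
  rw [Fin.prod_univ_castSucc, Fin.last_add_one, pathChain]
  simp only [Fin.coeSucc_eq_succ]
  calc _ ≤ (∏ i : Fin k, K (x i.castSucc) (x i.succ)) * (h (x (Fin.last k)) * h (x 0)) := by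
        gcongr
    _ = _ := by ring

variable [MeasurableSpace α]

theorem measurable_pathChain (hK : Measurable (Function.uncurry K)) (hh : Measurable h) (k : ℕ) :
    Measurable (pathChain K h k) := by
  unfold pathChain
  fun_prop

theorem lintegral_mul_pathChain_le {μ : Measure α} [SigmaFinite μ] {c : ℝ≥0∞}
    (hK : Measurable (Function.uncurry K)) (hh : Measurable h)
    (hschur : ∀ᵐ a ∂μ, ∫⁻ t, h t * K t a ∂μ ≤ c * h a) (k : ℕ) :
    ∫⁻ x, h (x 0) * pathChain K h k x ∂Measure.pi (fun _ => μ) ≤ c ^ k * ∫⁻ t, h t ^ 2 ∂μ := by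
  induction k with
  | zero =>
    simp only [pathChain_zero, pow_zero, one_mul, ← sq]
    exact ((measurePreserving_funUnique μ (Fin 1)).lintegral_comp (hh.pow_const 2)).le
  | succ k ih =>
    set ν := Measure.pi fun _ : Fin (k + 1) => μ
    have hchain := measurable_pathChain hK hh k
    have hchain' := measurable_pathChain hK hh (k + 1)
    have hK' (a : α) : Measurable fun t => K t a := hK.comp (measurable_id.prodMk measurable_const)
    have hschur' : ∀ᵐ y ∂ν, ∫⁻ t, h t * K t (y 0) ∂μ ≤ c * h (y 0) :=
      Measure.tendsto_eval_ae_ae.eventually (p := fun a => ∫⁻ t, h t * K t a ∂μ ≤ c * h a) hschur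
    calc ∫⁻ x, h (x 0) * pathChain K h (k + 1) x ∂Measure.pi (fun _ => μ)
        = ∫⁻ y, ∫⁻ t, h t * K t (y 0) * pathChain K h k y ∂μ ∂ν := by
          rw [← (measurePreserving_piFinSuccAbove (fun _ => μ) 0).symm.lintegral_comp
            (by fun_prop), lintegral_prod_symm _ (by fun_prop)]
          simp [Fin.consEquiv, pathChain_cons, mul_assoc, ν]
      _ = ∫⁻ y, (∫⁻ t, h t * K t (y 0) ∂μ) * pathChain K h k y ∂ν :=
          lintegral_congr fun y => lintegral_mul_const _ (hh.mul (hK' _))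
      _ ≤ ∫⁻ y, c * (h (y 0) * pathChain K h k y) ∂ν :=
          lintegral_mono_ae <| hschur'.mono fun y hy => by
            rw [← mul_assoc]
            exact mul_le_mul_left hy _
      _ = c * ∫⁻ y, h (y 0) * pathChain K h k y ∂ν := lintegral_const_mul _ (by fun_prop)
      _ ≤ c ^ (k + 1) * ∫⁻ t, h t ^ 2 ∂μ := by
          rw [pow_succ', mul_assoc]
          gcongr

end PathChain

theorem inv_add_add_le_inv_sqrt_mul_inv_sqrt {a b δ : ℝ} (ha : 0 ≤ a) (hb : 0 ≤ b) (hδ : 0 < δ) :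
    (a + b + δ)⁻¹ ≤ (√(a + δ))⁻¹ * (√(b + δ))⁻¹ := by
  rw [← mul_inv, ← Real.sqrt_mul (by positivity)]
  apply inv_anti₀ (by positivity)
  rw [Real.sqrt_le_left (by positivity)]
  nlinarith [mul_nonneg ha hb]

theorem hasDerivAt_arctan_sqrt_div_sqrt {c t : ℝ} (hc : 0 < c) (ht : 0 < t) :
    HasDerivAt (fun t => 2 / √c * arctan (√t / √c)) ((√t)⁻¹ * (t + c)⁻¹) t := by
  refine ((((Real.hasDerivAt_sqrt ht.ne').div_const √c).arctan).const_mul (2 / √c)).congr_deriv ?_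
  have hsc : 0 < √c := Real.sqrt_pos.mpr hc
  have hst : 0 < √t := Real.sqrt_pos.mpr ht
  field_simp
  rw [Real.sq_sqrt ht.le, Real.sq_sqrt hc.le]
  ring

theorem lintegral_Ioi_inv_sqrt_mul_inv_add_le {c : ℝ} (hc : 0 < c) :
    ∫⁻ t in Ioi 0, ENNReal.ofReal ((√t)⁻¹ * (t + c)⁻¹) ≤ ENNReal.ofReal (π / √c) := by
  have hsc : 0 < √c := Real.sqrt_pos.mpr hc
  have hmono : MonotoneOn (fun t => 2 / √c * arctan (√t / √c)) (Ioi 0) := fun s _ t _ hst => by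
    dsimp only
    gcongr
  rw [lintegral_deriv_eq_volume_image_of_monotoneOn measurableSet_Ioi
    (fun t ht => (hasDerivAt_arctan_sqrt_div_sqrt hc ht).hasDerivWithinAt) hmono,
    ← sub_zero (π / √c), ← Real.volume_Icc]
  refine measure_mono (image_subset_iff.mpr fun t ht => ⟨by positivity, ?_⟩)
  calc 2 / √c * arctan (√t / √c) ≤ 2 / √c * (π / 2) := by
        gcongr; exact (Real.arctan_lt_pi_div_two _).le
    _ = π / √c := by ring

theorem setLIntegral_inv_add_le {δ : ℝ} (hδ : 0 < δ) (hδ' : δ < 1 / 2) :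
    ∫⁻ t in Icc 0 1, ENNReal.ofReal (t + δ)⁻¹ ≤ ENNReal.ofReal (2 * |log δ|) := by
  have hmono : MonotoneOn (fun t => log (t + δ)) (Icc 0 1) := fun s hs t _ hst =>
    Real.log_le_log (by linarith [hs.1]) (by linarith)
  have hderiv (t : ℝ) (ht : t ∈ Icc (0 : ℝ) 1) :
      HasDerivWithinAt (fun t => log (t + δ)) (t + δ)⁻¹ (Icc 0 1) t := by
    simpa using (((hasDerivAt_id' t).add_const δ).log (by linarith [ht.1])).hasDerivWithinAt
  rw [lintegral_deriv_eq_volume_image_of_monotoneOn measurableSet_Icc hderiv hmono,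
    abs_of_neg (Real.log_neg hδ (by linarith)), show 2 * -log δ = -log δ - log δ by ring,
    ← Real.volume_Icc]
  refine measure_mono (image_subset_iff.mpr fun t ht =>
    ⟨Real.log_le_log hδ (by linarith [ht.1]), ?_⟩)
  rw [← Real.log_inv]
  exact Real.log_le_log (by linarith [ht.1]) ((by linarith [ht.2] : t + δ ≤ 2).trans
    (by rw [le_inv_comm₀ two_pos hδ]; linarith))

noncomputable def cycleKernel (δ a b : ℝ) : ℝ≥0∞ := ENNReal.ofReal (a + b + δ)⁻¹

noncomputable def schurWeight (δ t : ℝ) : ℝ≥0∞ := ENNReal.ofReal (√(t + δ))⁻¹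

section Kernel

variable {δ : ℝ}

theorem measurable_cycleKernel : Measurable (Function.uncurry (cycleKernel δ)) := by
  unfold cycleKernel Function.uncurry
  fun_prop

theorem measurable_schurWeight : Measurable (schurWeight δ) := by
  unfold schurWeight
  fun_prop

theorem cycleKernel_le_schurWeight_mul (hδ : 0 < δ) {a b : ℝ} (ha : 0 ≤ a) (hb : 0 ≤ b) :
    cycleKernel δ a b ≤ schurWeight δ a * schurWeight δ b := by
  rw [schurWeight, schurWeight, ← ENNReal.ofReal_mul (by positivity)]
  exact ENNReal.ofReal_le_ofReal (inv_add_add_le_inv_sqrt_mul_inv_sqrt ha hb hδ)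

theorem ofReal_prod_cycle_le_schurWeight_mul_pathChain (hδ : 0 < δ) {k : ℕ} (x : Fin (k + 1) → ℝ)
    (hx : ∀ i, 0 ≤ x i) :
    ENNReal.ofReal (∏ i, (x i + x (i + 1) + δ)⁻¹) ≤
      schurWeight δ (x 0) * pathChain (cycleKernel δ) (schurWeight δ) k x := by
  rw [ENNReal.ofReal_prod_of_nonneg fun i _ => by have := hx i; have := hx (i + 1); positivity]
  exact prod_cycle_le_mul_pathChain x (cycleKernel_le_schurWeight_mul hδ (hx _) (hx _))

theorem setLIntegral_schurWeight_mul_cycleKernel_le (hδ : 0 < δ) {a : ℝ} (ha : 0 ≤ a) :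
    ∫⁻ t in Icc 0 1, schurWeight δ t * cycleKernel δ t a ≤ ENNReal.ofReal π * schurWeight δ a := by
  have hc : 0 < a + δ := by positivity
  calc ∫⁻ t in Icc 0 1, schurWeight δ t * cycleKernel δ t a
      -- drop `t = 0`, where the junk value `(√0)⁻¹ = 0` breaks the pointwise bound below
      = ∫⁻ t in Ioc 0 1, schurWeight δ t * cycleKernel δ t a :=
        setLIntegral_congr Ioc_ae_eq_Icc.symm
    _ ≤ ∫⁻ t in Ioi 0, schurWeight δ t * cycleKernel δ t a :=
        lintegral_mono_set Ioc_subset_Ioi_self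
    _ ≤ ∫⁻ t in Ioi 0, ENNReal.ofReal ((√t)⁻¹ * (t + (a + δ))⁻¹) :=
        setLIntegral_mono (by fun_prop) fun t ht => by
          have ht : 0 < t := ht
          rw [schurWeight, cycleKernel, ← ENNReal.ofReal_mul (by positivity), add_assoc]
          gcongr
          linarith
    _ ≤ ENNReal.ofReal (π / √(a + δ)) := lintegral_Ioi_inv_sqrt_mul_inv_add_le hc
    _ = ENNReal.ofReal π * schurWeight δ a := by
        rw [schurWeight, ← ENNReal.ofReal_mul pi_pos.le, div_eq_mul_inv]

theorem setLIntegral_schurWeight_sq_le (hδ : 0 < δ) (hδ' : δ < 1 / 2) :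
    ∫⁻ t in Icc 0 1, schurWeight δ t ^ 2 ≤ ENNReal.ofReal (2 * |log δ|) := by
  refine le_of_eq_of_le (setLIntegral_congr_fun measurableSet_Icc fun t ht => ?_)
    (setLIntegral_inv_add_le hδ hδ')
  rw [schurWeight, ← ENNReal.ofReal_pow (by positivity), inv_pow,
    Real.sq_sqrt (by linarith [ht.1])]

end Kernel

/-- For every integer `n ≥ 2` (here `n + 2` with `n : ℕ`) there is a constant
`C > 0` such that for all `δ ∈ (0, 1/2)`,
`∫_{[0,1]^n} ∏_{i=1}^{n} 1/(x_i + x_{i+1} + δ) dx ≤ C |log δ|`, indices cyclic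
(`x_{n+1} = x_1`, realized by the cyclic addition `i + 1` in `Fin (n+2)`). -/
theorem cycle_integral_log_bound (n : ℕ) :
    ∃ C : ℝ, 0 < C ∧ ∀ δ : ℝ, δ ∈ Set.Ioo (0 : ℝ) (1/2) →
      ∫⁻ x in Set.univ.pi (fun _ : Fin (n + 2) => Set.Icc (0 : ℝ) 1),
          ENNReal.ofReal (∏ i : Fin (n + 2), (x i + x (i + 1) + δ)⁻¹)
        ≤ ENNReal.ofReal (C * |Real.log δ|) := by
  refine ⟨2 * π ^ (n + 1), by positivity, fun δ ⟨hδ, hδ'⟩ => ?_⟩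
  set chain := pathChain (cycleKernel δ) (schurWeight δ) (n + 1)
  have hschur : ∀ᵐ a ∂volume.restrict (Icc (0 : ℝ) 1),
      ∫⁻ t in Icc 0 1, schurWeight δ t * cycleKernel δ t a ≤ ENNReal.ofReal π * schurWeight δ a :=
    (ae_restrict_iff' measurableSet_Icc).mpr
      (ae_of_all _ fun a ha => setLIntegral_schurWeight_mul_cycleKernel_le hδ ha.1)
  calc _ ≤ ∫⁻ x in univ.pi fun _ => Icc 0 1, schurWeight δ (x 0) * chain x :=
        setLIntegral_mono ((measurable_schurWeight.comp (measurable_pi_apply 0)).mul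
          (measurable_pathChain measurable_cycleKernel measurable_schurWeight _))
          fun x hx => ofReal_prod_cycle_le_schurWeight_mul_pathChain hδ x fun i => (hx i trivial).1
    _ = ∫⁻ x, schurWeight δ (x 0) * chain x ∂Measure.pi fun _ => volume.restrict (Icc 0 1) := by
        rw [volume_pi, Measure.restrict_pi_pi]
    _ ≤ ENNReal.ofReal π ^ (n + 1) * ∫⁻ t in Icc 0 1, schurWeight δ t ^ 2 :=
        lintegral_mul_pathChain_le measurable_cycleKernel measurable_schurWeight hschur (n + 1)
    _ ≤ ENNReal.ofReal π ^ (n + 1) * ENNReal.ofReal (2 * |log δ|) := by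
        gcongr
        exact setLIntegral_schurWeight_sq_le hδ hδ'
    _ = ENNReal.ofReal (2 * π ^ (n + 1) * |log δ|) := by
        rw [← ENNReal.ofReal_pow pi_pos.le, ← ENNReal.ofReal_mul (by positivity)]
        congr 1
        ring
end

section
/- For every integer n ≥ 2 there exists a constant C > 0 such that for all δ ∈ (0, 1/2): ∫_{[0,1]^n} 1/(x_1 + x_2 + δ)² · Π_{i=2}^{n−1} 1/(x_i + x_{i+1} + δ) dx_1 ⋯ dx_n ≤ C·|log δ|^{n−1}. -/
open MeasureTheory ENNReal

noncomputable def nu : Measure ℝ := (volume : Measure ℝ).restrict (Set.Icc 0 1)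

instance : IsProbabilityMeasure nu :=
  ⟨by simp [nu, Real.volume_Icc]⟩

lemma pi_restrict (k : ℕ) :
    (volume : Measure (Fin k → ℝ)).restrict (Set.univ.pi fun _ => Set.Icc (0:ℝ) 1)
      = Measure.pi (fun _ : Fin k => nu) := by
  refine (Measure.pi_eq fun s hs => ?_).symm
  rw [volume_pi, Measure.restrict_apply (MeasurableSet.univ_pi fun i => hs i),
    ← Set.pi_inter_distrib, Measure.pi_pi]
  exact Finset.prod_congr rfl fun i _ => (Measure.restrict_apply (hs i)).symm

lemma ae_cube (k : ℕ) :
    ∀ᵐ y ∂(Measure.pi fun _ : Fin k => nu), ∀ j, y j ∈ Set.Icc (0:ℝ) 1 := by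
  have hc : (Measure.pi fun _ : Fin k => nu) (Set.univ.pi fun _ => Set.Icc (0:ℝ) 1) = 1 := by
    rw [Measure.pi_pi]
    simp [nu, Real.volume_Icc]
  have h : (Measure.pi fun _ : Fin k => nu)
      (Set.univ.pi fun _ => Set.Icc (0:ℝ) 1)ᶜ = 0 := by
    rw [measure_compl (MeasurableSet.univ_pi fun _ => measurableSet_Icc) (measure_ne_top _ _),
      hc, measure_univ, tsub_self]
  have h2 : ∀ᵐ y ∂(Measure.pi fun _ : Fin k => nu),
      y ∈ (Set.univ.pi fun _ => Set.Icc (0:ℝ) 1) := ae_iff.2 h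
  filter_upwards [h2] with y hy j
  exact hy j (Set.mem_univ j)

lemma integral_Icc_eq_interval (f : ℝ → ℝ) :
    ∫ t in Set.Icc (0:ℝ) 1, f t = ∫ t in (0:ℝ)..1, f t := by
  rw [MeasureTheory.integral_Icc_eq_integral_Ioc, ← intervalIntegral.integral_of_le zero_le_one]

lemma lint_inv_le (δ : ℝ) (h0 : 0 < δ) (h2 : δ < 1/2) :
    ∫⁻ t, ENNReal.ofReal ((t + δ)⁻¹) ∂nu ≤ ENNReal.ofReal (2 * |Real.log δ|) := by
  have hcont : ContinuousOn (fun t : ℝ => (t + δ)⁻¹) (Set.Icc 0 1) := by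
    apply ContinuousOn.inv₀ (by fun_prop)
    intro t ht
    nlinarith [ht.1]
  have hint : IntegrableOn (fun t : ℝ => (t + δ)⁻¹) (Set.Icc 0 1) :=
    hcont.integrableOn_Icc
  have hnn : 0 ≤ᵐ[nu] fun t : ℝ => (t + δ)⁻¹ := by
    filter_upwards [ae_restrict_mem measurableSet_Icc] with t ht
    have : (0:ℝ) ≤ t + δ := by nlinarith [ht.1]
    positivity
  rw [show nu = (volume : Measure ℝ).restrict (Set.Icc 0 1) from rfl,
    ← ofReal_integral_eq_lintegral_ofReal hint (by exact hnn)]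
  apply ENNReal.ofReal_le_ofReal
  have hval : ∫ t in Set.Icc (0:ℝ) 1, (t + δ)⁻¹ = Real.log (1 + δ) - Real.log δ := by
    rw [integral_Icc_eq_interval]
    rw [intervalIntegral.integral_comp_add_right (fun u : ℝ => u⁻¹) δ]
    rw [integral_inv (by
      intro hmem
      rcases Set.mem_uIcc.1 hmem with ⟨h, _⟩ | ⟨_, h⟩ <;> linarith)]
    rw [zero_add, Real.log_div (by linarith) (by linarith)]
  rw [hval]
  have hlogneg : Real.log δ < 0 := Real.log_neg h0 (by linarith)
  have habs : |Real.log δ| = -Real.log δ := abs_of_neg hlogneg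
  have h1 : Real.log (1 + δ) ≤ -Real.log δ := by
    rw [← Real.log_inv]
    apply Real.log_le_log (by linarith)
    have hinv : δ * δ⁻¹ = 1 := mul_inv_cancel₀ (ne_of_gt h0)
    nlinarith [hinv, sq_nonneg δ, h0.le]
  linarith [habs]

lemma lint_sq_le (a : ℝ) (ha : 0 < a) :
    ∫⁻ t, ENNReal.ofReal ((t + a)⁻¹ * (t + a)⁻¹) ∂nu ≤ ENNReal.ofReal a⁻¹ := by
  have hcont : ContinuousOn (fun t : ℝ => (t + a)⁻¹ * (t + a)⁻¹) (Set.Icc 0 1) := by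
    apply ContinuousOn.mul <;>
    · apply ContinuousOn.inv₀ (by fun_prop)
      intro t ht
      nlinarith [ht.1]
  have hint : IntegrableOn (fun t : ℝ => (t + a)⁻¹ * (t + a)⁻¹) (Set.Icc 0 1) :=
    hcont.integrableOn_Icc
  have hnn : 0 ≤ᵐ[nu] fun t : ℝ => (t + a)⁻¹ * (t + a)⁻¹ := by
    filter_upwards with t
    exact mul_self_nonneg _
  rw [show nu = (volume : Measure ℝ).restrict (Set.Icc 0 1) from rfl,
    ← ofReal_integral_eq_lintegral_ofReal hint (by exact hnn)]
  apply ENNReal.ofReal_le_ofReal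
  have hval : ∫ t in Set.Icc (0:ℝ) 1, (t + a)⁻¹ * (t + a)⁻¹
      = ((1 + a) ^ (-1:ℤ) - a ^ (-1:ℤ)) / (-1) := by
    rw [integral_Icc_eq_interval]
    rw [intervalIntegral.integral_comp_add_right (fun u : ℝ => u⁻¹ * u⁻¹) a]
    have heq : (fun u : ℝ => u⁻¹ * u⁻¹) = fun u : ℝ => u ^ (-2:ℤ) := by
      funext u
      rw [zpow_neg, zpow_two, mul_inv]
    rw [heq, integral_zpow (Or.inr ⟨by norm_num, by
      intro hmem
      rcases Set.mem_uIcc.1 hmem with ⟨h, _⟩ | ⟨_, h⟩ <;> linarith⟩)]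
    norm_num
  rw [hval]
  have h1 : (0:ℝ) ≤ (1 + a)⁻¹ := by positivity
  rw [zpow_neg_one, zpow_neg_one]
  have : ((1 + a)⁻¹ - a⁻¹) / (-1) = a⁻¹ - (1 + a)⁻¹ := by ring
  rw [this]
  linarith

lemma lintegral_pi_prod {k : ℕ} (F : ℝ → ENNReal) (hF : Measurable F) :
    ∫⁻ y, ∏ j, F (y j) ∂(Measure.pi fun _ : Fin k => nu) = (∫⁻ t, F t ∂nu) ^ k := by
  induction k with
  | zero => simp
  | succ k ih =>
    have hmp := (measurePreserving_piFinSuccAbove (fun _ : Fin (k+1) => nu) 0).symm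
    have hg : Measurable fun y : Fin (k+1) → ℝ => ∏ j, F (y j) :=
      Finset.measurable_prod _ fun j _ => hF.comp (measurable_pi_apply j)
    rw [← hmp.lintegral_comp hg]
    simp_rw [MeasurableEquiv.piFinSuccAbove_symm_apply, Fin.insertNthEquiv,
      Fin.prod_univ_succ, Fin.insertNth_zero, Equiv.coe_fn_mk]
    simp only [Fin.zero_succAbove, cast_eq, Function.comp_def, Fin.cons_zero, Fin.cons_succ]
    rw [lintegral_prod_mul (f := F) (g := fun y : Fin k → ℝ => ∏ j, F (y j)) hF.aemeasurable
      (Finset.measurable_prod _ fun j _ => hF.comp (measurable_pi_apply j)).aemeasurable, ih,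
      pow_succ, mul_comm]

/-- For every integer `n ≥ 2` (here `n + 2` with `n : ℕ`) there is a constant
`C > 0` such that for all `δ ∈ (0, 1/2)`,
`∫_{[0,1]^n} 1/(x_1+x_2+δ)² ∏_{i=2}^{n-1} 1/(x_i + x_{i+1} + δ) dx ≤ C |log δ|^{n-1}`
(path of consecutive pairs, first factor squared: realized as an extra factor
`1/(x_0 + x_1 + δ)` times the full path product). -/
theorem chain_integral_squared_first_log_bound (n : ℕ) :
    ∃ C : ℝ, 0 < C ∧ ∀ δ : ℝ, δ ∈ Set.Ioo (0 : ℝ) (1/2) →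
      ∫⁻ x in Set.univ.pi (fun _ : Fin (n + 2) => Set.Icc (0 : ℝ) 1),
          ENNReal.ofReal ((x 0 + x 1 + δ)⁻¹ *
            ∏ i : Fin (n + 1), (x i.castSucc + x i.succ + δ)⁻¹)
        ≤ ENNReal.ofReal (C * |Real.log δ| ^ (n + 1)) := by
  refine ⟨2 ^ (n + 1), by positivity, fun δ hδ => ?_⟩
  obtain ⟨h0, h2⟩ := hδ
  have hG : Measurable fun x : Fin (n + 2) → ℝ =>
      ENNReal.ofReal ((x 0 + x 1 + δ)⁻¹ * (x 0 + x 1 + δ)⁻¹) *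
        ∏ j : Fin n, ENNReal.ofReal ((x j.succ.succ + δ)⁻¹) := by
    apply Measurable.mul
    · fun_prop
    · exact Finset.measurable_prod _ fun j _ => by fun_prop
  have hmp := measurePreserving_piFinSuccAbove (fun _ : Fin (n + 2) => nu) 0
  rw [pi_restrict (n + 2)]
  calc
    ∫⁻ x, ENNReal.ofReal ((x 0 + x 1 + δ)⁻¹ *
          ∏ i : Fin (n + 1), (x i.castSucc + x i.succ + δ)⁻¹)
        ∂(Measure.pi fun _ : Fin (n + 2) => nu)
      ≤ ∫⁻ x, (ENNReal.ofReal ((x 0 + x 1 + δ)⁻¹ * (x 0 + x 1 + δ)⁻¹) *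
          ∏ j : Fin n, ENNReal.ofReal ((x j.succ.succ + δ)⁻¹))
        ∂(Measure.pi fun _ : Fin (n + 2) => nu) := by
      apply lintegral_mono_ae
      filter_upwards [ae_cube (n + 2)] with x hx
      have hpos : ∀ i : Fin (n + 2), (0:ℝ) ≤ x i := fun i => (hx i).1
      have hA : (0:ℝ) < x 0 + x 1 + δ := by nlinarith [hpos 0, hpos 1]
      calc
        ENNReal.ofReal ((x 0 + x 1 + δ)⁻¹ *
            ∏ i : Fin (n + 1), (x i.castSucc + x i.succ + δ)⁻¹)
          ≤ ENNReal.ofReal ((x 0 + x 1 + δ)⁻¹ * (x 0 + x 1 + δ)⁻¹ *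
            ∏ j : Fin n, (x j.succ.succ + δ)⁻¹) := by
          apply ENNReal.ofReal_le_ofReal
          rw [Fin.prod_univ_succ]
          simp only [Fin.castSucc_zero, Fin.succ_zero_eq_one]
          rw [← mul_assoc]
          apply mul_le_mul_of_nonneg_left
          · apply Finset.prod_le_prod
            · intro j _
              have : (0:ℝ) < x j.succ.castSucc + x j.succ.succ + δ := by
                nlinarith [hpos j.succ.castSucc, hpos j.succ.succ]
              positivity
            · intro j _
              apply inv_anti₀
              · nlinarith [hpos j.succ.succ]
              · nlinarith [hpos j.succ.castSucc]
          · positivity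
        _ = ENNReal.ofReal ((x 0 + x 1 + δ)⁻¹ * (x 0 + x 1 + δ)⁻¹) *
            ∏ j : Fin n, ENNReal.ofReal ((x j.succ.succ + δ)⁻¹) := by
          rw [ENNReal.ofReal_mul (by positivity),
            ENNReal.ofReal_prod_of_nonneg]
          intro j _
          have : (0:ℝ) < x j.succ.succ + δ := by nlinarith [hpos j.succ.succ]
          positivity
    _ = ∫⁻ p : ℝ × (Fin (n + 1) → ℝ),
          ENNReal.ofReal ((p.1 + p.2 0 + δ)⁻¹ * (p.1 + p.2 0 + δ)⁻¹) *
            ∏ j : Fin n, ENNReal.ofReal ((p.2 j.succ + δ)⁻¹)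
          ∂(nu.prod (Measure.pi fun _ : Fin (n + 1) => nu)) := by
      rw [← (hmp.symm _).lintegral_comp hG]
      refine lintegral_congr fun p => ?_
      simp only [MeasurableEquiv.piFinSuccAbove_symm_apply, Fin.insertNthEquiv,
        Fin.insertNth_zero, Equiv.coe_fn_mk]
      simp only [Fin.zero_succAbove, cast_eq, Function.comp_def, Fin.cons_zero, Fin.cons_succ,
        ← Fin.succ_zero_eq_one]
    _ = ∫⁻ y, (∫⁻ t, ENNReal.ofReal ((t + y 0 + δ)⁻¹ * (t + y 0 + δ)⁻¹) *
            ∏ j : Fin n, ENNReal.ofReal ((y j.succ + δ)⁻¹) ∂nu)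
          ∂(Measure.pi fun _ : Fin (n + 1) => nu) := by
      apply lintegral_prod_symm
      apply Measurable.aemeasurable
      apply Measurable.mul
      · fun_prop
      · exact Finset.measurable_prod _ fun j _ => by fun_prop
    _ ≤ ∫⁻ y, (∏ j : Fin (n + 1), ENNReal.ofReal ((y j + δ)⁻¹))
          ∂(Measure.pi fun _ : Fin (n + 1) => nu) := by
      apply lintegral_mono_ae
      filter_upwards [ae_cube (n + 1)] with y hy
      have h0' : (0:ℝ) < y 0 + δ := by nlinarith [(hy 0).1]
      have hmul : ∫⁻ t, ENNReal.ofReal ((t + y 0 + δ)⁻¹ * (t + y 0 + δ)⁻¹) *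
            (∏ j : Fin n, ENNReal.ofReal ((y j.succ + δ)⁻¹)) ∂nu
          = (∫⁻ t, ENNReal.ofReal ((t + y 0 + δ)⁻¹ * (t + y 0 + δ)⁻¹) ∂nu) *
            ∏ j : Fin n, ENNReal.ofReal ((y j.succ + δ)⁻¹) :=
        lintegral_mul_const _ (by fun_prop)
      rw [hmul, Fin.prod_univ_succ]
      apply mul_le_mul_left
      calc
        ∫⁻ t, ENNReal.ofReal ((t + y 0 + δ)⁻¹ * (t + y 0 + δ)⁻¹) ∂nu
          = ∫⁻ t, ENNReal.ofReal ((t + (y 0 + δ))⁻¹ * (t + (y 0 + δ))⁻¹) ∂nu := by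
            simp_rw [← add_assoc]
        _ ≤ ENNReal.ofReal ((y 0 + δ)⁻¹) := lint_sq_le _ h0'
    _ = (∫⁻ t, ENNReal.ofReal ((t + δ)⁻¹) ∂nu) ^ (n + 1) :=
      lintegral_pi_prod (fun t => ENNReal.ofReal ((t + δ)⁻¹)) (by fun_prop)
    _ ≤ (ENNReal.ofReal (2 * |Real.log δ|)) ^ (n + 1) := by
      exact pow_le_pow_left' (lint_inv_le δ h0 h2) _
    _ = ENNReal.ofReal ((2:ℝ) ^ (n + 1) * |Real.log δ| ^ (n + 1)) := by
      rw [← ENNReal.ofReal_pow (by positivity), mul_pow]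
end

section
/- For every integer n ≥ 2 there exists a constant C > 0 such that for all δ ∈ (0, 1/2): ∫_{[0,1]^n} 1/(x_1 + x_2 + δ)² · Π_{i=2}^{n} 1/(x_i + x_{i+1} + δ) dx_1 ⋯ dx_n ≤ C·δ^{−1}, where indices are taken cyclically, i.e. x_{n+1} := x_1. -/
open MeasureTheory Real Set

lemma gm_le' {u v w t : ℝ} (hu : 0 < u) (hv : 0 < v) (huw : u ≤ w) (hvw : v ≤ w)
    (ht0 : 0 ≤ t) (ht1 : t ≤ 1) : u ^ t * v ^ (1 - t) ≤ w := by
  have hw : 0 < w := lt_of_lt_of_le hu huw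
  calc u ^ t * v ^ (1 - t) ≤ w ^ t * w ^ (1 - t) := by gcongr <;> linarith
      _ = w := by rw [← Real.rpow_add hw]; simp

lemma lintegral_fin_prod' {m : ℕ} (μ : Measure ℝ) [SigmaFinite μ]
    (f : Fin m → ℝ → ENNReal) (hf : ∀ i, Measurable (f i)) :
    ∫⁻ x : Fin m → ℝ, ∏ i, f i (x i) ∂(Measure.pi fun _ => μ) = ∏ i, ∫⁻ y, f i y ∂μ := by
  induction m with
  | zero => simp
  | succ m ih =>
    have A := (measurePreserving_piFinSuccAbove (fun _ : Fin (m+1) => μ) 0).symm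
    have hF : Measurable fun x : Fin (m+1) → ℝ => ∏ i, f i (x i) :=
      Finset.measurable_prod _ fun i _ => (hf i).comp (measurable_pi_apply i)
    rw [← A.lintegral_comp hF]
    simp only [MeasurableEquiv.piFinSuccAbove_symm_apply, Fin.insertNthEquiv,
      Fin.prod_univ_succ, Fin.insertNth_zero, Equiv.coe_fn_mk, Fin.cons_succ,
      Fin.zero_succAbove, Fin.cons_zero, cast_eq]
    rw [lintegral_prod_mul (f := f 0) (g := fun y : Fin m → ℝ => ∏ i : Fin m, f i.succ (y i))
      ((hf 0).aemeasurable)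
      ((Finset.measurable_prod _ fun i _ =>
        (hf i.succ).comp (measurable_pi_apply i)).aemeasurable)]
    rw [ih (fun i => f i.succ) (fun i => hf i.succ)]

lemma onedim' {δ ε : ℝ} (hδ : 0 < δ) (hε : 0 < ε) :
    ∫⁻ y in Set.Icc (0:ℝ) 1, ENNReal.ofReal ((y + δ) ^ (-(1 + ε))) ≤
      ENNReal.ofReal (δ ^ (-ε) / ε) := by
  have hc : ContinuousOn (fun y : ℝ => (y + δ) ^ (-(1 + ε))) (Icc 0 1) := by
    apply ContinuousOn.rpow_const (by fun_prop)
    intro y hy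
    left
    have := hy.1
    positivity
  have hint : IntegrableOn (fun y : ℝ => (y + δ) ^ (-(1 + ε))) (Icc 0 1) :=
    hc.integrableOn_compact isCompact_Icc
  rw [← ofReal_integral_eq_lintegral_ofReal hint ?_]
  · apply ENNReal.ofReal_le_ofReal
    rw [integral_Icc_eq_integral_Ioc, ← intervalIntegral.integral_of_le zero_le_one]
    rw [show (fun y : ℝ => (y + δ) ^ (-(1+ε))) = fun y : ℝ => ((y + δ) ^ (-(1+ε)) : ℝ) from rfl]
    rw [intervalIntegral.integral_comp_add_right (fun y : ℝ => y ^ (-(1+ε))) δ]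
    rw [zero_add]
    rw [integral_rpow (Or.inr ⟨by intro h; nlinarith, Set.notMem_uIcc_of_lt hδ (by linarith)⟩)]
    rw [show -(1+ε) + 1 = -ε by ring]
    have h1 : (0:ℝ) ≤ (1 + δ) ^ (-ε) := rpow_nonneg (by linarith) _
    have : ((1 + δ) ^ (-ε) - δ ^ (-ε)) / (-ε) = (δ ^ (-ε) - (1 + δ) ^ (-ε)) / ε := by
      rw [div_neg, ← neg_div, neg_sub]
    rw [this]
    gcongr
    linarith
  · rw [Filter.EventuallyLE, ae_restrict_iff' measurableSet_Icc]
    refine Filter.Eventually.of_forall fun y hy => ?_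
    exact rpow_nonneg (by linarith [hy.1]) _

lemma core' (n : ℕ) (δ : ℝ) (hδ : 0 < δ) (x : Fin (n+2) → ℝ) (hx : ∀ j, 0 ≤ x j) :
    (x 0 + x 1 + δ)⁻¹ * ∏ i : Fin (n+2), (x i + x (i+1) + δ)⁻¹
      ≤ ∏ j : Fin (n+2), (x j + δ) ^ (-(1 + ((n:ℝ)+2)⁻¹)) := by
  have hN : (0:ℝ) < (n:ℝ) + 2 := by positivity
  set ε : ℝ := ((n:ℝ)+2)⁻¹ with hε
  have hy : ∀ j, 0 < x j + δ := fun j => add_pos_of_nonneg_of_pos (hx j) hδ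
  set t : Fin (n+2) → ℝ := fun j => (j : ℕ) / ((n:ℝ)+2) with ht
  have ht0 : ∀ j, 0 ≤ t j := fun j => by positivity
  have ht1 : ∀ j, t j ≤ 1 := fun j => by
    rw [ht]
    simp only
    rw [div_le_one hN]
    have h : (j : ℕ) ≤ n + 2 := j.isLt.le
    exact_mod_cast h
  have key : ∏ j : Fin (n+2), (x j + δ) ^ (1 + ε)
      ≤ (x 0 + x 1 + δ) * ∏ i : Fin (n+2), (x i + x (i+1) + δ) := by
    have step1 : ∏ j : Fin (n+2), (x j + δ) ^ (1 + ε)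
        = ∏ j : Fin (n+2), ((if j = 0 then (x 0 + δ) else 1) *
            ((x j + δ) ^ (t j) * (x j + δ) ^ (1 - t (j-1)))) := by
      refine Finset.prod_congr rfl fun j _ => ?_
      by_cases hj : j = 0
      · subst hj
        have h0 : t 0 = 0 := by simp [ht]
        have h1 : t (0 - 1) = ((n:ℝ)+1) / ((n:ℝ)+2) := by
          rw [ht]
          norm_num [Fin.coe_sub_one]
        have hlt : ((n:ℝ)+1)/((n:ℝ)+2) < 1 := by rw [div_lt_one hN]; linarith
        rw [if_pos rfl, ← Real.rpow_add (hy 0),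
          ← Real.rpow_one_add' (hy 0).le (by rw [h0, h1]; nlinarith)]
        congr 1
        rw [h0, h1, hε]
        field_simp
        norm_num
      · rw [if_neg hj, one_mul, ← Real.rpow_add (hy j)]
        congr 1
        have hval : ((j - 1 : Fin (n+2)) : ℕ) = (j : ℕ) - 1 := by
          rw [Fin.coe_sub_one, if_neg hj]
        have hj1 : 1 ≤ (j : ℕ) := by
          rcases Nat.eq_zero_or_pos (j : ℕ) with h | h
          · exact absurd (Fin.ext h : j = 0) hj
          · exact h
        rw [ht]
        simp only
        rw [hval, Nat.cast_sub hj1, hε]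
        push_cast
        field_simp
        ring
    have step2 : ∏ j : Fin (n+2), ((if j = 0 then (x 0 + δ) else 1) *
            ((x j + δ) ^ (t j) * (x j + δ) ^ (1 - t (j-1))))
        = (x 0 + δ) * ∏ j : Fin (n+2), ((x j + δ) ^ (t j) * (x j + δ) ^ (1 - t (j-1))) := by
      rw [Finset.prod_mul_distrib]
      congr 1
      rw [Finset.prod_ite_eq' Finset.univ (0 : Fin (n+2)) (fun _ => x 0 + δ)]
      simp
    have step3 : ∏ j : Fin (n+2), ((x j + δ) ^ (t j) * (x j + δ) ^ (1 - t (j-1)))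
        = ∏ i : Fin (n+2), ((x i + δ) ^ (t i) * (x (i+1) + δ) ^ (1 - t i)) := by
      rw [Finset.prod_mul_distrib, Finset.prod_mul_distrib]
      congr 1
      rw [← Equiv.prod_comp (Equiv.addRight (1 : Fin (n+2)))
        (fun j => (x j + δ) ^ (1 - t (j-1)))]
      refine Finset.prod_congr rfl fun i _ => ?_
      simp [add_sub_cancel_right]
    rw [step1, step2, step3]
    have hb : ∀ i : Fin (n+2), (x i + δ) ^ (t i) * (x (i+1) + δ) ^ (1 - t i)
        ≤ x i + x (i+1) + δ := fun i =>
      gm_le' (hy i) (hy (i+1)) (by linarith [hx (i+1)]) (by linarith [hx i]) (ht0 i) (ht1 i)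
    have hprod : ∏ i : Fin (n+2), ((x i + δ) ^ (t i) * (x (i+1) + δ) ^ (1 - t i))
        ≤ ∏ i : Fin (n+2), (x i + x (i+1) + δ) := by
      refine Finset.prod_le_prod (fun i _ => ?_) (fun i _ => hb i)
      exact mul_nonneg (rpow_nonneg (hy i).le _) (rpow_nonneg (hy (i+1)).le _)
    have h0 : x 0 + δ ≤ x 0 + x 1 + δ := by linarith [hx 1]
    refine mul_le_mul h0 hprod ?_ (by linarith [hx 0, hx 1])
    exact Finset.prod_nonneg fun i _ =>
      mul_nonneg (rpow_nonneg (hy i).le _) (rpow_nonneg (hy (i+1)).le _)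
  have hLHS : (x 0 + x 1 + δ)⁻¹ * ∏ i : Fin (n+2), (x i + x (i+1) + δ)⁻¹
      = ((x 0 + x 1 + δ) * ∏ i : Fin (n+2), (x i + x (i+1) + δ))⁻¹ := by
    rw [mul_inv, Finset.prod_inv_distrib]
  have hRHS : ∏ j : Fin (n+2), (x j + δ) ^ (-(1 + ε))
      = (∏ j : Fin (n+2), (x j + δ) ^ (1 + ε))⁻¹ := by
    rw [← Finset.prod_inv_distrib]
    refine Finset.prod_congr rfl fun j _ => ?_
    rw [← Real.rpow_neg (hy j).le]
  rw [hLHS, hRHS]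
  have hpos : 0 < ∏ j : Fin (n+2), (x j + δ) ^ (1 + ε) :=
    Finset.prod_pos fun j _ => rpow_pos_of_pos (hy j) _
  exact inv_anti₀ hpos key


/-- For every integer `n ≥ 2` (here `n + 2` with `n : ℕ`) there is a constant
`C > 0` such that for all `δ ∈ (0, 1/2)`,
`∫_{[0,1]^n} 1/(x_1+x_2+δ)² ∏_{i=2}^{n} 1/(x_i + x_{i+1} + δ) dx ≤ C δ⁻¹`, indices cyclic
(`x_{n+1} = x_1`; the squared first factor is realized as an extra factor `1/(x_0 + x_1 + δ)`
times the full cyclic product). -/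
theorem cycle_integral_squared_first_delta_bound (n : ℕ) :
    ∃ C : ℝ, 0 < C ∧ ∀ δ : ℝ, δ ∈ Set.Ioo (0 : ℝ) (1/2) →
      ∫⁻ x in Set.univ.pi (fun _ : Fin (n + 2) => Set.Icc (0 : ℝ) 1),
          ENNReal.ofReal ((x 0 + x 1 + δ)⁻¹ *
            ∏ i : Fin (n + 2), (x i + x (i + 1) + δ)⁻¹)
        ≤ ENNReal.ofReal (C * δ⁻¹) := by
  have hN : (0:ℝ) < (n:ℝ) + 2 := by positivity
  set ε : ℝ := ((n:ℝ)+2)⁻¹ with hε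
  have hεpos : 0 < ε := by positivity
  refine ⟨((n:ℝ)+2)^(n+2), by positivity, fun δ hδ => ?_⟩
  obtain ⟨hδ0, hδ2⟩ := hδ
  set g : ℝ → ENNReal := fun y => ENNReal.ofReal ((y + δ) ^ (-(1+ε))) with hg
  have hgm : Measurable g := by
    refine ENNReal.measurable_ofReal.comp ?_
    fun_prop
  set cube := Set.univ.pi (fun _ : Fin (n + 2) => Set.Icc (0 : ℝ) 1) with hcube
  have hcubem : MeasurableSet cube :=
    MeasurableSet.univ_pi fun _ => measurableSet_Icc
  calc
    ∫⁻ x in cube, ENNReal.ofReal ((x 0 + x 1 + δ)⁻¹ *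
        ∏ i : Fin (n + 2), (x i + x (i + 1) + δ)⁻¹)
      ≤ ∫⁻ x in cube, ∏ j : Fin (n+2), g (x j) := by
        refine setLIntegral_mono
          (Finset.measurable_prod _ fun j _ => hgm.comp (measurable_pi_apply j)) fun x hx => ?_
        have hx' : ∀ j, 0 ≤ x j := fun j => ((Set.mem_univ_pi.1 hx) j).1
        refine (ENNReal.ofReal_le_ofReal (core' n δ hδ0 x hx')).trans_eq ?_
        rw [ENNReal.ofReal_prod_of_nonneg fun j _ =>
          rpow_nonneg (by linarith [hx' j]) _]
    _ = ∫⁻ x : Fin (n+2) → ℝ, ∏ j : Fin (n+2), ((Icc (0:ℝ) 1).indicator g) (x j) := by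
        rw [← lintegral_indicator hcubem]
        refine lintegral_congr fun x => ?_
        by_cases hx : x ∈ cube
        · rw [Set.indicator_of_mem hx]
          exact Finset.prod_congr rfl fun j _ =>
            (Set.indicator_of_mem ((Set.mem_univ_pi.1 hx) j) g).symm
        · rw [Set.indicator_of_notMem hx]
          symm
          obtain ⟨j, hj⟩ : ∃ j, x j ∉ Icc (0:ℝ) 1 := by
            by_contra h
            push_neg at h
            exact hx (Set.mem_univ_pi.2 h)
          refine Finset.prod_eq_zero (Finset.mem_univ j) ?_
          rw [Set.indicator_of_notMem hj]
    _ = ∏ j : Fin (n+2), ∫⁻ y, ((Icc (0:ℝ) 1).indicator g) y := by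
        rw [volume_pi]
        exact lintegral_fin_prod' volume _ fun j => hgm.indicator measurableSet_Icc
    _ ≤ ∏ _j : Fin (n+2), ENNReal.ofReal (δ ^ (-ε) / ε) := by
        refine Finset.prod_le_prod' fun j _ => ?_
        rw [lintegral_indicator measurableSet_Icc]
        exact onedim' hδ0 hεpos
    _ ≤ ENNReal.ofReal (((n:ℝ)+2)^(n+2) * δ⁻¹) := by
        rw [Finset.prod_const, Finset.card_univ, Fintype.card_fin]
        rw [← ENNReal.ofReal_pow (by positivity)]
        apply ENNReal.ofReal_le_ofReal
        have hdiv : δ ^ (-ε) / ε = δ ^ (-ε) * ((n:ℝ)+2) := by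
          rw [hε, div_eq_mul_inv, inv_inv]
        rw [hdiv, mul_pow]
        have hpow : (δ ^ (-ε)) ^ (n+2) = δ⁻¹ := by
          rw [← Real.rpow_natCast (δ ^ (-ε)) (n+2), ← Real.rpow_mul hδ0.le]
          rw [show (-ε) * ((n+2 : ℕ):ℝ) = -1 by rw [hε]; push_cast; field_simp]
          exact Real.rpow_neg_one δ
        rw [hpow, mul_comm]
end

section
/- Let f : ℂ → ℂ be entire (holomorphic on all of ℂ) with f(z) ≠ 0 for every z ∈ ℂ, f(0) = 1, and suppose there exist constants A, B ≥ 0 such that |f(z)| ≤ exp(A + B|z|²) for all z ∈ ℂ, and that f(z)·f(−z) = exp(−z²) for all z ∈ ℂ. Then there exists b ∈ ℂ such that f(z) = exp(−z²/2 + b·z) for all z ∈ ℂ. -/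
/-!
Write `f = exp ∘ g` with `g` entire and `g 0 = 0`. The functional equation makes
`u z = g z + z ^ 2 / 2` odd, and the growth bound gives `Re (u z) ≤ A + (B + 1/2) ‖z‖ ^ 2`.
Since `u 0 = 0`, the Borel–Carathéodory theorem turns this one-sided bound into a quadratic bound
on `‖u z‖`, so by Cauchy's estimates `u` is a polynomial of degree at most two; being odd, it is
`u z = b z`.
-/

open Complex Metric Filter Nat

namespace Complex

theorem _root_.Differentiable.exists_exp_eq {f : ℂ → ℂ} (hf : Differentiable ℂ f)
    (hne : ∀ z, f z ≠ 0) :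
    ∃ g : ℂ → ℂ, Differentiable ℂ g ∧ g 0 = log (f 0) ∧ ∀ z, exp (g z) = f z := by
  obtain ⟨g, hg0, hg⟩ := (hf.deriv.div hf hne).isExactOn_univ.with_val_at 0 (log (f 0))
  have hgd : ∀ z, HasDerivAt g (deriv f z / f z) z := fun z => hg z (Set.mem_univ z)
  have hconst : ∀ z, HasDerivAt (fun z => f z * exp (-g z)) 0 z := fun z => by
    refine ((hf z).hasDerivAt.mul (hgd z).neg.cexp).congr_deriv ?_
    field_simp [hne z]
    ring
  refine ⟨g, fun z => (hgd z).differentiableAt, hg0, fun z => ?_⟩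
  have := is_const_of_deriv_eq_zero (fun z => (hconst z).differentiableAt)
    (fun z => (hconst z).deriv) z 0
  simp only [hg0, exp_neg, exp_log (hne 0), mul_inv_cancel₀ (hne 0)] at this
  exact ((mul_inv_eq_one₀ (exp_ne_zero _)).mp this).symm

theorem _root_.Differentiable.apply_eq_apply_of_exp_eq {h : ℂ → ℂ} (hh : Differentiable ℂ h)
    {c : ℂ} (hexp : ∀ z, exp (h z) = c) (z w : ℂ) : h z = h w := by
  refine is_const_of_deriv_eq_zero hh (fun x => ?_) z w
  have hc : HasDerivAt (fun y => exp (h y)) (exp (h x) * deriv h x) x := (hh x).hasDerivAt.cexp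
  rw [show (fun y => exp (h y)) = fun _ => c from funext hexp] at hc
  simpa [exp_ne_zero] using hc.unique (hasDerivAt_const x c)

theorem norm_le_of_re_le_add_mul_pow {u : ℂ → ℂ} (hu : Differentiable ℂ u) (hu0 : u 0 = 0)
    {a b : ℝ} {n : ℕ} (ha : 0 ≤ a) (hb : 0 < b) (hre : ∀ z, (u z).re ≤ a + b * ‖z‖ ^ n)
    (z : ℂ) : ‖u z‖ ≤ 2 * (a + b * (2 * ‖z‖) ^ n) := by
  rcases eq_or_ne z 0 with rfl | hz
  · simp only [hu0, norm_zero]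
    positivity
  have hz : 0 < ‖z‖ := norm_pos_iff.mpr hz
  have hmaps : Set.MapsTo u (ball 0 (2 * ‖z‖)) {w | w.re ≤ a + b * (2 * ‖z‖) ^ n} :=
    fun w hw => by
      have : ‖w‖ ≤ 2 * ‖z‖ := (mem_ball_zero_iff.mp hw).le
      calc (u w).re ≤ a + b * ‖w‖ ^ n := hre w
        _ ≤ a + b * (2 * ‖z‖) ^ n := by gcongr
  calc ‖u z‖ ≤ 2 * (a + b * (2 * ‖z‖) ^ n) * ‖z‖ / (2 * ‖z‖ - ‖z‖) :=
        borelCaratheodory_zero (by positivity) hu.differentiableOn hmaps (by positivity)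
          (mem_ball_zero_iff.mpr (by linarith)) hu0
    _ = 2 * (a + b * (2 * ‖z‖) ^ n) := by field_simp; ring

theorem _root_.Differentiable.iteratedDeriv_eq_zero_of_norm_le {f : ℂ → ℂ}
    (hf : Differentiable ℂ f) {a b : ℝ} {n m : ℕ} (ha : 0 ≤ a) (hb : 0 ≤ b)
    (hbound : ∀ z, ‖f z‖ ≤ a + b * ‖z‖ ^ n) (hnm : n < m) (c : ℂ) :
    iteratedDeriv m f c = 0 := by
  set K := m ! * (a + b * 2 ^ n)
  have hle : ∀ R ≥ max 1 ‖c‖, ‖iteratedDeriv m f c‖ ≤ K / R := by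
    intro R hR
    have hR1 : 1 ≤ R := le_of_max_le_left hR
    have hRc : ‖c‖ ≤ R := le_of_max_le_right hR
    have hsphere : ∀ w ∈ sphere c R, ‖f w‖ ≤ (a + b * 2 ^ n) * R ^ n := fun w hw => by
      have hw : ‖w‖ ≤ 2 * R := by
        calc ‖w‖ ≤ ‖w - c‖ + ‖c‖ := norm_le_norm_sub_add w c
          _ ≤ 2 * R := by rw [mem_sphere_iff_norm.mp hw]; linarith
      calc ‖f w‖ ≤ a + b * ‖w‖ ^ n := hbound w
        _ ≤ a * R ^ n + b * (2 * R) ^ n := by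
          gcongr
          exact le_mul_of_one_le_right ha (one_le_pow₀ hR1)
        _ = (a + b * 2 ^ n) * R ^ n := by ring
    have hRm : R ^ n * R ≤ R ^ m := (pow_succ R n).symm.le.trans (pow_le_pow_right₀ hR1 hnm)
    calc ‖iteratedDeriv m f c‖ ≤ m ! * ((a + b * 2 ^ n) * R ^ n) / R ^ m :=
          norm_iteratedDeriv_le_of_forall_mem_sphere_norm_le m (by linarith) hf.diffContOnCl
            hsphere
      _ ≤ K / R := by
          rw [div_le_div_iff₀ (by positivity) (by linarith)]
          calc m ! * ((a + b * 2 ^ n) * R ^ n) * R = K * (R ^ n * R) := by ring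
            _ ≤ K * R ^ m := by gcongr
  exact norm_le_zero_iff.mp <|
    ge_of_tendsto (tendsto_const_nhds.div_atTop tendsto_id) (eventually_atTop.2 ⟨_, hle⟩)

theorem _root_.Differentiable.eq_sum_range_of_iteratedDeriv_eq_zero {f : ℂ → ℂ}
    (hf : Differentiable ℂ f) {n : ℕ} (h : ∀ m, n < m → iteratedDeriv m f 0 = 0) (z : ℂ) :
    f z = ∑ k ∈ Finset.range (n + 1), (k ! : ℂ)⁻¹ * iteratedDeriv k f 0 * z ^ k := by
  rw [← taylorSeries_eq_of_entire' hf (c := 0) (z := z)]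
  simp only [sub_zero]
  refine tsum_eq_sum fun k hk => ?_
  rw [h k (by simp at hk; omega), mul_zero, zero_mul]

theorem _root_.Differentiable.exists_eq_mul_of_odd_of_norm_le {u : ℂ → ℂ}
    (hu : Differentiable ℂ u) (hodd : Function.Odd u) {a b : ℝ} (ha : 0 ≤ a) (hb : 0 ≤ b)
    (hbound : ∀ z, ‖u z‖ ≤ a + b * ‖z‖ ^ 2) : ∃ c, ∀ z, u z = c * z := by
  have hpoly : ∀ z, u z = u 0 + deriv u 0 * z + iteratedDeriv 2 u 0 / 2 * z ^ 2 := fun z => by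
    rw [hu.eq_sum_range_of_iteratedDeriv_eq_zero
      (fun m hm => hu.iteratedDeriv_eq_zero_of_norm_le ha hb hbound hm 0) z]
    simp [Finset.sum_range_succ, div_eq_inv_mul]
  have hu0 : u 0 = 0 := by
    have := hodd 0
    rw [neg_zero] at this
    linear_combination this / 2
  have h2 : iteratedDeriv 2 u 0 = 0 := by
    have := hodd 1
    rw [hpoly, hpoly 1, hu0] at this
    linear_combination this
  exact ⟨deriv u 0, fun z => by rw [hpoly z, hu0, h2]; ring⟩

end Complex

/-- An entire nonvanishing function `f` with `f 0 = 1`, of order at most two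
(`|f z| ≤ exp (A + B |z|²)`), satisfying `f z · f (−z) = exp (−z²)`, is of the form
`f z = exp (−z²/2 + b z)`. -/
theorem entire_functional_equation_form
    (f : ℂ → ℂ) (hf : Differentiable ℂ f) (hne : ∀ z, f z ≠ 0) (h0 : f 0 = 1)
    (A B : ℝ) (hA : 0 ≤ A) (hB : 0 ≤ B)
    (hgrowth : ∀ z, ‖f z‖ ≤ Real.exp (A + B * ‖z‖ ^ 2))
    (hfeq : ∀ z, f z * f (-z) = Complex.exp (-z ^ 2)) :
    ∃ b : ℂ, ∀ z, f z = Complex.exp (-z ^ 2 / 2 + b * z) := by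
  obtain ⟨g, hg, hg0, hexp⟩ := hf.exists_exp_eq hne
  rw [h0, log_one] at hg0
  set u : ℂ → ℂ := fun z => g z + z ^ 2 / 2
  have hu : Differentiable ℂ u := hg.add ((differentiable_pow 2).div_const 2)
  have hu0 : u 0 = 0 := by simp [u, hg0]
  have hsum : ∀ z, exp (u z + u (-z)) = 1 := fun z => by
    rw [show u z + u (-z) = g z + g (-z) + z ^ 2 by simp only [u]; ring, exp_add, exp_add,
      hexp, hexp, hfeq, ← exp_add, neg_add_cancel, exp_zero]
  have hsum_diff : Differentiable ℂ fun z => u z + u (-z) := hu.add (hu.comp differentiable_neg)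
  have hodd : Function.Odd u := fun z => by
    have := hsum_diff.apply_eq_apply_of_exp_eq hsum z 0
    rw [neg_zero, hu0, add_zero] at this
    linear_combination this
  have hre : ∀ z, (u z).re ≤ A + (B + 1 / 2) * ‖z‖ ^ 2 := fun z => by
    have hgz : (g z).re ≤ A + B * ‖z‖ ^ 2 := by
      rw [← Real.exp_le_exp, ← norm_exp, hexp]
      exact hgrowth z
    have hz2 : (z ^ 2).re ≤ ‖z‖ ^ 2 := (re_le_norm _).trans (norm_pow z 2).le
    simp only [u, add_re, div_ofNat_re]
    linarith
  obtain ⟨b, hb⟩ := hu.exists_eq_mul_of_odd_of_norm_le hodd (by positivity) (by positivity)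
    fun z => (norm_le_of_re_le_add_mul_pow hu hu0 hA (by positivity) hre z).trans_eq
      (by ring : _ = 2 * A + 8 * (B + 1 / 2) * ‖z‖ ^ 2)
  refine ⟨b, fun z => ?_⟩
  rw [← hexp z, show g z = u z - z ^ 2 / 2 by simp [u], hb z]
  ring_nf
end

section
/- Let X be a type and F : X × X → ℂ. Assume that for every k ≥ 1 and every tuple (z_1, …, z_k) ∈ X^k one has Σ_{σ} sgn(σ) · Π_{i=1}^k F(z_i, z_{σ(i)}) = Σ_{p} Π_{{i,j} ∈ p} ( −F(z_i, z_j)·F(z_j, z_i) ), where the left sum is over all permutations σ of {1,…,k} with no fixed point, and the right sum is over all perfect matchings p of {1,…,k} (so the right-hand side is 0 when k is odd). Then for every n ≥ 1 and every tuple (z_1, …, z_n) ∈ X^n, Σ_{σ} sgn(σ) · Π_{i=1}^n F(z_i, z_{σ(i)}) = 0, where the sum is over all permutations σ of {1,…,n} having no fixed point and no 2-cycle (i.e. all cycles of σ have length at least 3). -/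
/-!
Every permutation `σ` factors uniquely as `p * τ` with `p` and `τ` disjoint, `p` an involution
(the product of the 2-cycles of `σ`) and `τ` free of 2-cycles, and the weight
`sgn σ * ∏ F (z i, z (σ i))` is multiplicative along this factorisation. Grouping by the support
`S` of `p`, the fixed-point-free sum becomes `∑_S M(S) L(Sᶜ)`, where `M(S)` is the matching sum
on `S` and `L(T)` the sum over permutations of `T` with all cycles of length `≥ 3`. By strong
induction on `n`, `L(T) = 0` for every nonempty proper `T`; since `M(∅) = L(∅) = 1`, the
hypothesis `M(univ) = ∑_S M(S) L(Sᶜ) = M(univ) + L(univ)` forces `L(univ) = 0`.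
-/

open Equiv Finset

namespace Equiv.Perm

section Decomposition

variable {α : Type*}

def NoTwoCycles (σ : Perm α) : Prop := ∀ i, σ (σ i) = i → σ i = i

theorem apply_apply_eq_self_of_mul_self_eq_one {p : Perm α} (hp : p * p = 1) (i : α) :
    p (p i) = i := by
  rw [← mul_apply, hp, one_apply]

theorem symm_eq_self_of_mul_self_eq_one {p : Perm α} (hp : p * p = 1) : p.symm = p :=
  inv_eq_of_mul_eq_one_left hp

variable [DecidableEq α]

def twoCyclePart (σ : Perm α) : Perm α :=
  Function.Involutive.toPerm (fun i => if σ (σ i) = i then σ i else i) fun i => by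
    by_cases h : σ (σ i) = i <;> simp [h]

def longCyclePart (σ : Perm α) : Perm α := twoCyclePart σ * σ

theorem twoCyclePart_apply (σ : Perm α) (i : α) :
    twoCyclePart σ i = if σ (σ i) = i then σ i else i := rfl

theorem longCyclePart_apply (σ : Perm α) (i : α) :
    longCyclePart σ i = if σ (σ i) = i then i else σ i := by
  by_cases h : σ (σ i) = i <;> simp [longCyclePart, twoCyclePart_apply, h]

theorem twoCyclePart_mul_self (σ : Perm α) : twoCyclePart σ * twoCyclePart σ = 1 :=
  Equiv.ext (Function.Involutive.toPerm_involutive _)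

theorem twoCyclePart_mul_longCyclePart (σ : Perm α) :
    twoCyclePart σ * longCyclePart σ = σ := by
  rw [longCyclePart, ← mul_assoc, twoCyclePart_mul_self, one_mul]

theorem disjoint_twoCyclePart_longCyclePart (σ : Perm α) :
    Disjoint (twoCyclePart σ) (longCyclePart σ) := fun i => by
  by_cases h : σ (σ i) = i
  · simp [longCyclePart_apply, h]
  · simp [twoCyclePart_apply, h]

theorem noTwoCycles_longCyclePart (σ : Perm α) : NoTwoCycles (longCyclePart σ) := fun i => by
  by_cases h : σ (σ i) = i
  · simp [longCyclePart_apply, h]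
  · have h' : σ (σ (σ i)) ≠ σ i := fun h' => h (σ.injective h')
    simp [longCyclePart_apply, h, h']

theorem twoCyclePart_mul_of_disjoint {p τ : Perm α} (hp : p * p = 1) (hτ : NoTwoCycles τ)
    (h : Disjoint p τ) : twoCyclePart (p * τ) = p := by
  have hp_fix : ∀ j, τ j ≠ j → p j = j := fun j hj => (h j).resolve_right hj
  have hτ_moved : ∀ j, τ j ≠ j → τ (τ j) ≠ τ j := fun j hj h' => hj (τ.injective h')
  ext i
  rw [twoCyclePart_apply, mul_apply, mul_apply]
  by_cases hi : τ i = i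
  · have hτp : τ (p i) = p i := by
      by_contra hne
      have hpi : p i = i := p.injective (hp_fix _ hne)
      exact hne (by rw [hpi, hi])
    rw [hi, hτp, apply_apply_eq_self_of_mul_self_eq_one hp, if_pos rfl]
  · rw [hp_fix _ (hτ_moved i hi), hp_fix _ (hτ_moved _ (hτ_moved i hi)), hp_fix i hi,
      if_neg fun h' => hi (hτ i h')]

theorem longCyclePart_mul_of_disjoint {p τ : Perm α} (hp : p * p = 1) (hτ : NoTwoCycles τ)
    (h : Disjoint p τ) : longCyclePart (p * τ) = τ := by
  rw [longCyclePart, twoCyclePart_mul_of_disjoint hp hτ h, ← mul_assoc, hp, one_mul]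

end Decomposition

section Sums

variable {α : Type*} [Fintype α] [DecidableEq α] {R : Type*} [CommRing R]

-- Only moved points contribute, so the weight of a permutation supported on `T` is the same
-- whether it is regarded as a permutation of `α` or of `T`.
def signedProd (f : α → α → R) (σ : Perm α) : R :=
  ((sign σ : ℤ) : R) * ∏ i ∈ σ.support, f i (σ i)

theorem signedProd_one (f : α → α → R) : signedProd f 1 = 1 := by
  simp [signedProd]

theorem signedProd_mul_of_disjoint (f : α → α → R) {σ τ : Perm α} (h : Disjoint σ τ) :
    signedProd f (σ * τ) = signedProd f σ * signedProd f τ := by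
  have hσ : ∀ i ∈ σ.support, f i ((σ * τ) i) = f i (σ i) := fun i hi => by
    rw [mul_apply, (h i).resolve_left (mem_support.mp hi)]
  have hτ : ∀ i ∈ τ.support, f i ((σ * τ) i) = f i (τ i) := fun i hi => by
    rw [mul_apply, (h (τ i)).resolve_right (mem_support.mp (apply_mem_support.mpr hi))]
  simp only [signedProd, sign_mul, h.support_mul, prod_union h.disjoint_support,
    prod_congr rfl hσ, prod_congr rfl hτ, Units.val_mul, Int.cast_mul]
  ring

instance : DecidablePred (NoTwoCycles : Perm α → Prop) := fun σ => by
  unfold NoTwoCycles; infer_instance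

def supportSum (f : α → α → R) (T : Finset α) : R :=
  ∑ σ ∈ univ.filter (fun σ : Perm α => σ.support = T), signedProd f σ

def involutionSum (f : α → α → R) (T : Finset α) : R :=
  ∑ p ∈ univ.filter (fun p : Perm α => p * p = 1 ∧ p.support = T), signedProd f p

def longCycleSum (f : α → α → R) (T : Finset α) : R :=
  ∑ τ ∈ univ.filter (fun τ : Perm α => NoTwoCycles τ ∧ τ.support = T), signedProd f τ

theorem support_twoCyclePart_union_support_longCyclePart (σ : Perm α) :
    (twoCyclePart σ).support ∪ (longCyclePart σ).support = σ.support := by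
  rw [← (disjoint_twoCyclePart_longCyclePart σ).support_mul, twoCyclePart_mul_longCyclePart]

theorem disjoint_of_support_eq_sdiff {p τ : Perm α} {S T : Finset α} (hp : p.support = S)
    (hτ : τ.support = T \ S) : Disjoint p τ := by
  rw [disjoint_iff_disjoint_support, hp, hτ]
  exact disjoint_sdiff

theorem supportSum_eq_sum_powerset (f : α → α → R) (T : Finset α) :
    supportSum f T = ∑ S ∈ T.powerset, involutionSum f S * longCycleSum f (T \ S) := by
  simp_rw [involutionSum, longCycleSum, sum_mul_sum, ← sum_product', sum_sigma']
  refine sum_nbij' (fun σ => ⟨(twoCyclePart σ).support, (twoCyclePart σ, longCyclePart σ)⟩)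
    (fun x => x.2.1 * x.2.2) ?_ ?_ ?_ ?_ ?_
  · intro σ hσ
    have hT := support_twoCyclePart_union_support_longCyclePart σ
    rw [(mem_filter.mp hσ).2] at hT
    simp only [mem_sigma, mem_powerset, mem_product, mem_filter, mem_univ, true_and]
    refine ⟨hT ▸ subset_union_left, ⟨twoCyclePart_mul_self σ, trivial⟩,
      noTwoCycles_longCyclePart σ, ?_⟩
    rw [← hT, union_sdiff_cancel_left (disjoint_twoCyclePart_longCyclePart σ).disjoint_support]
  · rintro ⟨S, p, τ⟩ hx
    simp only [mem_sigma, mem_powerset, mem_product, mem_filter, mem_univ, true_and] at hx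
    obtain ⟨hST, ⟨-, hpS⟩, -, hτS⟩ := hx
    have hpτ := disjoint_of_support_eq_sdiff hpS hτS
    simp only [mem_filter, mem_univ, true_and]
    rw [hpτ.support_mul, hpS, hτS, union_sdiff_of_subset hST]
  · intro σ _
    exact twoCyclePart_mul_longCyclePart σ
  · rintro ⟨S, p, τ⟩ hx
    simp only [mem_sigma, mem_powerset, mem_product, mem_filter, mem_univ, true_and] at hx
    obtain ⟨-, ⟨hp, hpS⟩, hτ, hτS⟩ := hx
    have hpτ := disjoint_of_support_eq_sdiff hpS hτS
    simp only [twoCyclePart_mul_of_disjoint hp hτ hpτ, longCyclePart_mul_of_disjoint hp hτ hpτ,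
      hpS]
  · intro σ _
    conv_lhs => rw [← twoCyclePart_mul_longCyclePart σ]
    exact signedProd_mul_of_disjoint f (disjoint_twoCyclePart_longCyclePart σ)

theorem sum_signedProd_filter_support_eq_empty (f : α → α → R) (P : Perm α → Prop)
    [DecidablePred P] (h1 : P 1) :
    ∑ σ ∈ univ.filter (fun σ : Perm α => P σ ∧ σ.support = ∅), signedProd f σ = 1 := by
  have h : univ.filter (fun σ : Perm α => P σ ∧ σ.support = ∅) = {1} := by
    ext σ
    simp only [mem_filter, mem_univ, true_and, support_eq_empty_iff, mem_singleton]
    exact ⟨And.right, fun hσ => ⟨hσ ▸ h1, hσ⟩⟩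
  rw [h, sum_singleton, signedProd_one]

theorem involutionSum_empty (f : α → α → R) : involutionSum f ∅ = 1 :=
  sum_signedProd_filter_support_eq_empty f _ (mul_one 1)

theorem longCycleSum_empty (f : α → α → R) : longCycleSum f ∅ = 1 :=
  sum_signedProd_filter_support_eq_empty f _ fun _ _ => rfl

theorem longCycleSum_univ_eq_zero [Nonempty α] (f : α → α → R)
    (hWick : supportSum f univ = involutionSum f univ)
    (hL : ∀ T : Finset α, T.Nonempty → T ≠ univ → longCycleSum f T = 0) :
    longCycleSum f univ = 0 := by
  have hdec := supportSum_eq_sum_powerset f univ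
  rw [sum_eq_add_of_mem univ ∅ (mem_powerset_self _) (empty_mem_powerset _)
    univ_nonempty.ne_empty ?_, sdiff_self, bot_eq_empty, sdiff_empty, involutionSum_empty,
    longCycleSum_empty, mul_one, one_mul, hWick] at hdec
  · exact left_eq_add.mp hdec
  · rintro S - ⟨hS_univ, hS_empty⟩
    rw [← compl_eq_univ_sdiff, hL Sᶜ (sdiff_nonempty.mpr fun h => hS_univ (univ_subset_iff.mp h))
      ((compl_ne_univ_iff_nonempty S).mpr (nonempty_iff_ne_empty.mpr hS_empty)), mul_zero]

end Sums

section ExtendDomain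

variable {α β : Type*}

theorem noTwoCycles_extendDomain_iff {p : α → Prop} [DecidablePred p] (e : β ≃ Subtype p)
    (τ : Perm β) : NoTwoCycles (τ.extendDomain e) ↔ NoTwoCycles τ := by
  refine ⟨fun h b hb => e.injective (Subtype.ext ?_), fun h a ha => ?_⟩
  · have := h (e b) (by rw [extendDomain_apply_image, extendDomain_apply_image, hb])
    rwa [extendDomain_apply_image] at this
  · by_cases hp : p a
    · obtain ⟨b, rfl⟩ : ∃ b, (e b : α) = a := ⟨e.symm ⟨a, hp⟩, by simp⟩
      rw [extendDomain_apply_image, extendDomain_apply_image] at ha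
      rw [extendDomain_apply_image, h b (e.injective (Subtype.ext ha))]
    · exact extendDomain_apply_not_subtype _ _ hp

theorem exists_extendDomain_eq {p : α → Prop} [DecidablePred p] (e : β ≃ Subtype p)
    {σ : Perm α} (hσ : ∀ a, σ a ≠ a → p a) : ∃ τ : Perm β, τ.extendDomain e = σ := by
  have hσp : ∀ a, p (σ a) ↔ p a := fun a => by
    by_cases ha : σ a = a
    · rw [ha]
    · exact iff_of_true (hσ _ fun h => ha (σ.injective h)) (hσ a ha)
  refine ⟨e.permCongr.symm (σ.subtypePerm hσp), Equiv.ext fun a => ?_⟩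
  by_cases ha : p a
  · simp [extendDomain_apply_subtype _ _ ha, permCongr_apply]
  · rw [extendDomain_apply_not_subtype _ _ ha]
    exact (not_imp_comm.mp (hσ a) ha).symm

variable [Fintype α] [DecidableEq α] [Fintype β] [DecidableEq β] {R : Type*} [CommRing R]

theorem signedProd_extendDomain (f : α → α → R) {T : Finset α} (e : β ≃ T) (τ : Perm β) :
    signedProd f (τ.extendDomain e) = signedProd (fun a b => f (e a) (e b)) τ := by
  simp [signedProd, sign_extendDomain, support_extend_domain, prod_map, asEmbedding_apply,
    extendDomain_apply_image]

theorem support_extendDomain_eq_iff {T : Finset α} (e : β ≃ T) (τ : Perm β) :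
    (τ.extendDomain e).support = T ↔ τ.support = univ := by
  have hT : univ.map e.asEmbedding = T := by
    ext a
    simpa [asEmbedding] using
      ⟨fun ⟨b, hb⟩ => hb ▸ (e b).2, fun ha => ⟨e.symm ⟨a, ha⟩, by simp⟩⟩
  rw [support_extend_domain, ← map_inj (f := e.asEmbedding), hT]

theorem longCycleSum_eq_longCycleSum_univ (f : α → α → R) {T : Finset α} (e : β ≃ T) :
    longCycleSum f T = longCycleSum (fun a b => f (e a) (e b)) univ := by
  symm
  refine sum_bij (fun τ _ => τ.extendDomain e) ?_ ?_ ?_ ?_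
  · intro τ hτ
    simp only [mem_filter, mem_univ, true_and] at hτ ⊢
    rw [noTwoCycles_extendDomain_iff, support_extendDomain_eq_iff]
    exact hτ
  · intro τ₁ _ τ₂ _ h
    exact extendDomainHom_injective e h
  · intro σ hσ
    simp only [mem_filter, mem_univ, true_and] at hσ
    obtain ⟨τ, rfl⟩ := exists_extendDomain_eq e fun a ha => hσ.2 ▸ mem_support.mpr ha
    rw [noTwoCycles_extendDomain_iff, support_extendDomain_eq_iff] at hσ
    exact ⟨τ, by simpa using hσ, rfl⟩
  · intro τ _
    exact (signedProd_extendDomain f e τ).symm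

end ExtendDomain

section Involution

theorem disjoint_filter_lt_map {α : Type*} [Fintype α] [LinearOrder α] {p : Perm α}
    (hp : p * p = 1) :
    _root_.Disjoint (univ.filter (fun i => i < p i))
      ((univ.filter (fun i => i < p i)).map p.toEmbedding) := by
  refine disjoint_left.mpr fun i hi hi' => ?_
  simp only [mem_filter, mem_univ, true_and, mem_map_equiv, symm_eq_self_of_mul_self_eq_one hp,
    apply_apply_eq_self_of_mul_self_eq_one hp] at hi hi'
  exact lt_asymm hi hi'

variable {α : Type*} [Fintype α] [DecidableEq α] {R : Type*} [CommRing R]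

theorem sign_of_mul_self_eq_one {p : Perm α} (hp : p * p = 1) {k : ℕ}
    (hk : #p.support = 2 * k) : sign p = (-1) ^ k := by
  have hct := cycleType_of_pow_prime_eq_one (p := 2) (by rw [sq, hp])
  have hcard : Multiset.card p.cycleType = k := by
    have := p.sum_cycleType
    rw [hct, Multiset.sum_replicate, smul_eq_mul, hk] at this
    omega
  rw [sign_of_cycleType, sum_cycleType, hk, hcard, pow_add, pow_mul, neg_one_sq, one_pow,
    one_mul]

variable [LinearOrder α]

theorem support_eq_filter_lt_union_map {p : Perm α} (hp : p * p = 1) :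
    p.support = univ.filter (fun i => i < p i) ∪
      (univ.filter (fun i => i < p i)).map p.toEmbedding := by
  ext i
  simp only [mem_support, mem_union, mem_filter, mem_univ, true_and, mem_map_equiv,
    symm_eq_self_of_mul_self_eq_one hp, apply_apply_eq_self_of_mul_self_eq_one hp]
  rw [ne_comm, ne_iff_lt_or_gt]

theorem signedProd_of_mul_self_eq_one (f : α → α → R) {p : Perm α} (hp : p * p = 1) :
    signedProd f p = ∏ i ∈ univ.filter (fun i => i < p i), -(f i (p i) * f (p i) i) := by
  have hdisj := disjoint_filter_lt_map hp
  have hsign : sign p = (-1) ^ #(univ.filter fun i => i < p i) := sign_of_mul_self_eq_one hp <| by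
    rw [support_eq_filter_lt_union_map hp, card_union_of_disjoint hdisj, card_map, two_mul]
  rw [signedProd, support_eq_filter_lt_union_map hp, prod_union hdisj, prod_map, prod_neg,
    hsign, ← prod_mul_distrib]
  simp only [coe_toEmbedding, apply_apply_eq_self_of_mul_self_eq_one hp,
    Units.val_pow_eq_pow_val, Units.val_neg, Units.val_one, Int.cast_pow, Int.cast_neg,
    Int.cast_one]

end Involution

section Univ

variable {α : Type*} [Fintype α] [DecidableEq α] {R : Type*} [CommRing R]

theorem support_eq_univ_iff {σ : Perm α} : σ.support = univ ↔ ∀ i, σ i ≠ i := by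
  simp [eq_univ_iff_forall]

-- The decidability instances are parameters so that these lemmas match filters elaborated over
-- `Fin n`, where `∀ i` is decided by `Nat.decidableForallFin` rather than the `Fintype` instance.
theorem supportSum_univ (f : α → α → R) [DecidablePred fun σ : Perm α => ∀ i, σ i ≠ i] :
    supportSum f univ = ∑ σ ∈ univ.filter (fun σ : Perm α => ∀ i, σ i ≠ i),
      ((sign σ : ℤ) : R) * ∏ i, f i (σ i) := by
  refine sum_congr (filter_congr fun σ _ => support_eq_univ_iff) fun σ hσ => ?_
  rw [signedProd, support_eq_univ_iff.mpr (mem_filter.mp hσ).2]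

theorem longCycleSum_univ (f : α → α → R)
    [DecidablePred fun σ : Perm α => ∀ i, σ i ≠ i ∧ σ (σ i) ≠ i] :
    longCycleSum f univ = ∑ σ ∈ univ.filter (fun σ : Perm α => ∀ i, σ i ≠ i ∧ σ (σ i) ≠ i),
      ((sign σ : ℤ) : R) * ∏ i, f i (σ i) := by
  refine sum_congr (filter_congr fun σ _ => ?_) fun σ hσ => ?_
  · rw [support_eq_univ_iff]
    exact ⟨fun ⟨h, hfix⟩ i => ⟨hfix i, fun h' => hfix i (h i h')⟩,
      fun h => ⟨fun i h' => absurd h' (h i).2, fun i => (h i).1⟩⟩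
  · rw [signedProd, support_eq_univ_iff.mpr fun i => ((mem_filter.mp hσ).2 i).1]

theorem involutionSum_univ [LinearOrder α] (f : α → α → R)
    [DecidablePred fun p : Perm α => (∀ i, p i ≠ i) ∧ p * p = 1] :
    involutionSum f univ = ∑ p ∈ univ.filter (fun p : Perm α => (∀ i, p i ≠ i) ∧ p * p = 1),
      ∏ i ∈ univ.filter (fun i => i < p i), -(f i (p i) * f (p i) i) := by
  refine sum_congr (filter_congr fun p _ => ?_) fun p hp => ?_
  · rw [support_eq_univ_iff, and_comm]
  · exact signedProd_of_mul_self_eq_one f (mem_filter.mp hp).2.2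

end Univ

end Equiv.Perm

/-- Abstract vanishing lemma: if for every `k ≥ 1` and every tuple
`z : Fin k → X` the sum over fixed-point-free permutations of the signed products of a
two-point function `F` equals the sum over perfect matchings (encoded as fixed-point-free
involutions `p`, a matching pair `{i, j}` being `{i, p i}` with representative `i < p i`)
of `∏_{{i,j} ∈ p} (−F(z_i,z_j) F(z_j,z_i))`, then for every `n ≥ 1` and every tuple
`z : Fin n → X` the sum over permutations with no fixed point and no 2-cycle (all cycles of
length at least 3) of the signed products vanishes. -/
theorem vanishing_of_long_cycle_sum
    {X : Type*} (F : X × X → ℂ)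
    (hWick : ∀ k : ℕ, 1 ≤ k → ∀ z : Fin k → X,
      (∑ σ ∈ univ.filter (fun σ : Perm (Fin k) => ∀ i, σ i ≠ i),
        ((Perm.sign σ : ℤ) : ℂ) * ∏ i, F (z i, z (σ i)))
      = ∑ p ∈ univ.filter (fun p : Perm (Fin k) => (∀ i, p i ≠ i) ∧ p * p = 1),
          ∏ i ∈ univ.filter (fun i => i < p i),
            (-(F (z i, z (p i)) * F (z (p i), z i)))) :
    ∀ n : ℕ, 1 ≤ n → ∀ z : Fin n → X,
      ∑ σ ∈ univ.filter (fun σ : Perm (Fin n) => ∀ i, σ i ≠ i ∧ σ (σ i) ≠ i),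
        ((Perm.sign σ : ℤ) : ℂ) * ∏ i, F (z i, z (σ i)) = 0 := by
  intro n
  induction n using Nat.strong_induction_on with
  | _ n ih =>
  intro hn z
  have : Nonempty (Fin n) := ⟨⟨0, hn⟩⟩
  rw [← Perm.longCycleSum_univ fun i j => F (z i, z j)]
  refine Perm.longCycleSum_univ_eq_zero _ ?_ fun T hT hT_univ => ?_
  · rw [Perm.supportSum_univ, Perm.involutionSum_univ]
    exact hWick n hn z
  · rw [Perm.longCycleSum_eq_longCycleSum_univ _ T.equivFin.symm, Perm.longCycleSum_univ]
    refine ih #T ?_ (card_pos.mpr hT) fun j => z (T.equivFin.symm j)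
    simpa using (card_lt_iff_ne_univ T).mpr hT_univ
end
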